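/- arXiv:1803.02488 — 9 statements merged into one kernel-verified Lean document; each statement's English description precedes it below -/
import Mathlib

section
/- (Theorem 1, impossibility of consistent estimation from one noisy network.) Let f be a real-valued function of the true adjacency matrix A (for example a subgraph count), extended to models M=(α,β,A) by f(M)=f(A). Suppose there exists a model M=(α,β,A) whose dual M*=(1−β,1−α,A*) satisfies |f(M)−f(M*)| = d > 0. Then for every function f̂ : Ω → ℝ on the sample space Ω of symmetric {0,1} p×p matrices with zero diagonal, max over M' ∈ {M, M*} of μ_{M'}( { ω ∈ Ω : |f̂(ω) − f(M')| ≥ d/2 } ) ≥ 1/2, where μ_{M'} denotes the law of the observed matrix under model M'. -/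
open MeasureTheory Finset

/-- Index set of unordered vertex pairs, encoded as ordered pairs `(i, j)` with `i < j`.
A symmetric `{0,1}` matrix with zero diagonal is equivalent to a function
`EdgeIdx p → Bool`. -/
abbrev EdgeIdx (p : ℕ) := {q : Fin p × Fin p // q.1 < q.2}

/-- The probability that the edge `e` is observed as present, under the noisy
network model with true adjacency matrix `A` and error rates `α` (Type I) and
`β` (Type II). -/
def edgeProb {p : ℕ} (A : Fin p → Fin p → Bool) (α β : ℝ) (e : EdgeIdx p) : ℝ :=
  if A e.1.1 e.1.2 then 1 - β else α

/-- The law of the observed noisy network: the product probability measure on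
symmetric `{0,1}` matrices with zero diagonal (encoded as functions on the set
of unordered pairs) in which, independently over pairs, an edge is observed with
probability `1 − β` when truly present and `α` when truly absent. -/
noncomputable def noisyLaw (p : ℕ) (A : Fin p → Fin p → Bool) (α β : ℝ) :
    Measure (EdgeIdx p → Bool) :=
  ∑ ω : EdgeIdx p → Bool,
    (ENNReal.ofReal (∏ e : EdgeIdx p,
      if ω e then edgeProb A α β e else 1 - edgeProb A α β e)) • Measure.dirac ω

/-- The dual adjacency matrix `A*`, with `A*ᵢⱼ = 1 − Aᵢⱼ` for `i ≠ j` and zero diagonal. -/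
def dualAdj {p : ℕ} (A : Fin p → Fin p → Bool) : Fin p → Fin p → Bool :=
  fun i j => if i = j then false else ! A i j


lemma dual_law_eq {p : ℕ} (A : Fin p → Fin p → Bool) (α β : ℝ) :
    noisyLaw p (dualAdj A) (1 - β) (1 - α) = noisyLaw p A α β := by
  unfold noisyLaw
  have h : ∀ e : EdgeIdx p, edgeProb (dualAdj A) (1 - β) (1 - α) e = edgeProb A α β e := by
    intro e
    have hne : e.1.1 ≠ e.1.2 := ne_of_lt e.2
    unfold edgeProb dualAdj
    simp only [if_neg hne]
    cases hA : A e.1.1 e.1.2 <;> simp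
  simp only [h]

lemma law_apply {p : ℕ} (A : Fin p → Fin p → Bool) (α β : ℝ) (s : Set (EdgeIdx p → Bool)) :
    noisyLaw p A α β s = ∑ ω : EdgeIdx p → Bool,
      (ENNReal.ofReal (∏ e : EdgeIdx p,
        if ω e then edgeProb A α β e else 1 - edgeProb A α β e)) * s.indicator 1 ω := by
  unfold noisyLaw
  have hs : MeasurableSet s := s.toFinite.measurableSet
  rw [Measure.finset_sum_apply]
  congr 1; ext ω
  rw [Measure.smul_apply, Measure.dirac_apply' _ hs]
  rfl

lemma law_univ {p : ℕ} (A : Fin p → Fin p → Bool) (α β : ℝ)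
    (hα0 : 0 ≤ α) (hα1 : α ≤ 1) (hβ0 : 0 ≤ β) (hβ1 : β ≤ 1) :
    noisyLaw p A α β Set.univ = 1 := by
  rw [law_apply]
  simp only [Set.indicator_univ, Pi.one_apply, mul_one]
  have hnn : ∀ (ω : EdgeIdx p → Bool) (e : EdgeIdx p),
      0 ≤ if ω e then edgeProb A α β e else 1 - edgeProb A α β e := by
    intro ω e
    unfold edgeProb
    split <;> split <;> linarith
  rw [← ENNReal.ofReal_sum_of_nonneg (fun ω _ => Finset.prod_nonneg (fun e _ => hnn ω e))]
  have key : (∑ ω : EdgeIdx p → Bool, ∏ e : EdgeIdx p,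
      if ω e then edgeProb A α β e else 1 - edgeProb A α β e) = 1 := by
    rw [← Fintype.prod_sum (fun (e : EdgeIdx p) (b : Bool) =>
      if b then edgeProb A α β e else 1 - edgeProb A α β e)]
    rw [← Finset.prod_const_one (s := (univ : Finset (EdgeIdx p)))]
    apply Finset.prod_congr rfl
    intro e _
    simp [Fintype.sum_bool]
  rw [key, ENNReal.ofReal_one]

/-- Theorem 1 (impossibility of consistent estimation from a single noisy network):
if a functional `f` of the true adjacency matrix takes values at the model
`M = (α, β, A)` and its dual `M* = (1−β, 1−α, A*)` differing by `d > 0`, then for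
every estimator `f̂` of `f` based on the observed matrix, the worst error probability
over the two models `{M, M*}` of the event `|f̂ − f| ≥ d/2` is at least `1/2`. -/
theorem no_consistent_estimator_single_network
    (p : ℕ) (hp : 2 ≤ p)
    (A : Fin p → Fin p → Bool)
    (hAsym : ∀ i j, A i j = A j i) (hAdiag : ∀ i, A i i = false)
    (α β : ℝ) (hα0 : 0 ≤ α) (hα1 : α ≤ 1) (hβ0 : 0 ≤ β) (hβ1 : β ≤ 1)
    (hαβ : α + β ≤ 1)
    (f : (Fin p → Fin p → Bool) → ℝ)
    (d : ℝ) (hd : d = |f A - f (dualAdj A)|) (hdpos : 0 < d) :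
    ∀ fhat : (EdgeIdx p → Bool) → ℝ,
      (1 : ENNReal) / 2 ≤
        max (noisyLaw p A α β {ω | d / 2 ≤ |fhat ω - f A|})
          (noisyLaw p (dualAdj A) (1 - β) (1 - α) {ω | d / 2 ≤ |fhat ω - f (dualAdj A)|}) := by
  intro fhat
  set μ := noisyLaw p A α β
  rw [dual_law_eq]
  set E1 := {ω | d / 2 ≤ |fhat ω - f A|}
  set E2 := {ω | d / 2 ≤ |fhat ω - f (dualAdj A)|}
  have hcover : E1 ∪ E2 = Set.univ := by
    ext ω
    simp only [Set.mem_union, Set.mem_setOf_eq, Set.mem_univ, iff_true, E1, E2]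
    by_contra h
    push_neg at h
    obtain ⟨h1, h2⟩ := h
    have h3 : |f A - f (dualAdj A)| ≤ |fhat ω - f A| + |fhat ω - f (dualAdj A)| := by
      calc |f A - f (dualAdj A)| = |(fhat ω - f (dualAdj A)) - (fhat ω - f A)| := by ring_nf
        _ ≤ |fhat ω - f (dualAdj A)| + |fhat ω - f A| := abs_sub _ _
        _ = _ := add_comm _ _
    rw [← hd] at h3
    linarith
  have h1 : (1 : ENNReal) = μ Set.univ := (law_univ A α β hα0 hα1 hβ0 hβ1).symm
  have h2 : μ Set.univ ≤ μ E1 + μ E2 := by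
    rw [← hcover]; exact measure_union_le _ _
  have h3 : μ E1 + μ E2 ≤ max (μ E1) (μ E2) + max (μ E1) (μ E2) :=
    add_le_add (le_max_left _ _) (le_max_right _ _)
  have hm : (1 : ENNReal) ≤ 2 * max (μ E1) (μ E2) := by
    rw [two_mul]; rw [h1]; exact h2.trans h3
  rw [ENNReal.div_le_iff_le_mul (by simp) (by simp)]
  calc (1:ENNReal) ≤ 2 * max (μ E1) (μ E2) := hm
    _ = max (μ E1) (μ E2) * 2 := mul_comm _ _
end

section
/- Under the noisy network model with two independent replicate observations (Y_{i,j}) and (Y_{i,j,*}) of the same true adjacency matrix A, the statistic û₂ = (2N)^{-1} Σ_{i<j} |Y_{i,j,*} − Y_{i,j}| satisfies E(û₂) = (1−δ)α(1−α) + δβ(1−β), where N = p(p−1)/2 and δ = N^{-1} Σ_{i<j} A_{i,j}. -/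
open MeasureTheory Finset

/-- The Bernoulli mass function on `{0,1}`: mass `q` at `1` and `1 − q` at `0`. -/
noncomputable def bernMass (q a : ℝ) : ℝ := if a = 1 then q else 1 - q

/-!
For two `{0,1}`-valued variables, `|Y* − Y|` is the indicator of the two discordant events
`{Y = 0, Y* = 1}` and `{Y = 1, Y* = 0}`. For independent Bernoulli(`q`) replicates each has
probability `q(1 − q)`, where `q = 1 − β` on an edge and `q = α` on a non-edge, so each pair
contributes `A β(1 − β) + (1 − A) α(1 − α)`. Averaging over the `N` pairs `i < j` gives the
formula, since `∑_{i<j} Aᵢⱼ = δN`.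
-/

section Discordance

variable {Ω : Type*} {X X' : Ω → ℝ}

lemma abs_sub_eq_indicator_add_indicator (hX : ∀ ω, X ω = 0 ∨ X ω = 1)
    (hX' : ∀ ω, X' ω = 0 ∨ X' ω = 1) :
    (fun ω => |X' ω - X ω|) =
      {ω | X ω = 0 ∧ X' ω = 1}.indicator 1 + {ω | X ω = 1 ∧ X' ω = 0}.indicator 1 := by
  funext ω
  rcases hX ω with h | h <;> rcases hX' ω with h' | h' <;> simp [Set.indicator, h, h']

variable [MeasurableSpace Ω]

lemma measurableSet_eq_and_eq (hXm : Measurable X) (hX'm : Measurable X') (a b : ℝ) :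
    MeasurableSet {ω | X ω = a ∧ X' ω = b} :=
  (hXm (measurableSet_singleton a)).inter (hX'm (measurableSet_singleton b))

variable {μ : Measure Ω} [IsFiniteMeasure μ]

lemma integrable_abs_sub_of_zero_one (hXm : Measurable X) (hX'm : Measurable X')
    (hX : ∀ ω, X ω = 0 ∨ X ω = 1) (hX' : ∀ ω, X' ω = 0 ∨ X' ω = 1) :
    Integrable (fun ω => |X' ω - X ω|) μ := by
  rw [abs_sub_eq_indicator_add_indicator hX hX']
  exact ((integrable_const 1).indicator (measurableSet_eq_and_eq hXm hX'm 0 1)).add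
    ((integrable_const 1).indicator (measurableSet_eq_and_eq hXm hX'm 1 0))

lemma integral_abs_sub_of_zero_one (hXm : Measurable X) (hX'm : Measurable X')
    (hX : ∀ ω, X ω = 0 ∨ X ω = 1) (hX' : ∀ ω, X' ω = 0 ∨ X' ω = 1) :
    ∫ ω, |X' ω - X ω| ∂μ =
      μ.real {ω | X ω = 0 ∧ X' ω = 1} + μ.real {ω | X ω = 1 ∧ X' ω = 0} := by
  have h01 := measurableSet_eq_and_eq hXm hX'm 0 1
  have h10 := measurableSet_eq_and_eq hXm hX'm 1 0
  rw [abs_sub_eq_indicator_add_indicator hX hX',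
    integral_add' ((integrable_const 1).indicator h01) ((integrable_const 1).indicator h10),
    integral_indicator_one h01, integral_indicator_one h10]

lemma integral_abs_sub_of_bernMass {q : ℝ} (hq0 : 0 ≤ q) (hq1 : q ≤ 1)
    (hXm : Measurable X) (hX'm : Measurable X')
    (hX : ∀ ω, X ω = 0 ∨ X ω = 1) (hX' : ∀ ω, X' ω = 0 ∨ X' ω = 1)
    (hjoint : ∀ a b : ℝ, (a = 0 ∨ a = 1) → (b = 0 ∨ b = 1) →
      μ {ω | X ω = a ∧ X' ω = b} = ENNReal.ofReal (bernMass q a * bernMass q b)) :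
    ∫ ω, |X' ω - X ω| ∂μ = 2 * (q * (1 - q)) := by
  have hmass : bernMass q 0 * bernMass q 1 = q * (1 - q) ∧
      bernMass q 1 * bernMass q 0 = q * (1 - q) := by
    constructor <;> norm_num [bernMass]; ring
  have hvar : 0 ≤ q * (1 - q) := mul_nonneg hq0 (by linarith)
  rw [integral_abs_sub_of_zero_one hXm hX'm hX hX', measureReal_def, measureReal_def,
    hjoint 0 1 (.inl rfl) (.inr rfl), hjoint 1 0 (.inr rfl) (.inl rfl), hmass.1, hmass.2,
    ENNReal.toReal_ofReal hvar]
  ring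

end Discordance

lemma card_filter_fst_lt_snd_mul_two (p : ℕ) :
    #{q : Fin p × Fin p | q.1 < q.2} * 2 = p * (p - 1) := by
  have hcard : #{q : Fin p × Fin p | q.1 < q.2} = ∑ j : Fin p, (j : ℕ) := by
    rw [card_filter, Fintype.sum_prod_type, sum_comm]
    refine sum_congr rfl fun j _ => ?_
    rw [← card_filter, ← Fin.card_Iio]
    congr 1
    ext i
    simp
  rw [hcard, Fin.sum_univ_eq_sum_range (fun i => i) p, sum_range_id_mul_two]

lemma ite_eq_one_eq_mul_add_one_sub_mul {a : ℝ} (ha : a = 0 ∨ a = 1) (x y : ℝ) :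
    (if a = 1 then x else y) = a * x + (1 - a) * y := by
  rcases ha with rfl | rfl <;> norm_num

theorem expectation_u2hat_general
    {Ω : Type*} [MeasurableSpace Ω] (μ : Measure Ω) [IsProbabilityMeasure μ]
    (p : ℕ) (hp : 2 ≤ p)
    (A : Fin p → Fin p → ℝ)
    (hA01 : ∀ i j, A i j = 0 ∨ A i j = 1)
    (α β : ℝ) (hα0 : 0 ≤ α) (hα1 : α ≤ 1) (hβ0 : 0 ≤ β) (hβ1 : β ≤ 1)
    (Y Ystar : Fin p → Fin p → Ω → ℝ)
    (hYmeas : ∀ i j, Measurable (Y i j)) (hYstarmeas : ∀ i j, Measurable (Ystar i j))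
    (hY01 : ∀ i j ω, Y i j ω = 0 ∨ Y i j ω = 1)
    (hYstar01 : ∀ i j ω, Ystar i j ω = 0 ∨ Ystar i j ω = 1)
    (hjoint : ∀ i j, i < j → ∀ a b : ℝ, (a = 0 ∨ a = 1) → (b = 0 ∨ b = 1) →
      μ {ω | Y i j ω = a ∧ Ystar i j ω = b} =
        ENNReal.ofReal (bernMass (if A i j = 1 then 1 - β else α) a *
          bernMass (if A i j = 1 then 1 - β else α) b))
    (N δ : ℝ)
    (hN : N = (p : ℝ) * ((p : ℝ) - 1) / 2)
    (hδ : δ = N⁻¹ * ∑ q ∈ univ.filter (fun q : Fin p × Fin p => q.1 < q.2), A q.1 q.2) :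
    ∫ ω, (2 * N)⁻¹ * ∑ q ∈ univ.filter (fun q : Fin p × Fin p => q.1 < q.2),
        |Ystar q.1 q.2 ω - Y q.1 q.2 ω| ∂μ
      = (1 - δ) * α * (1 - α) + δ * β * (1 - β) := by
  set P := univ.filter (fun q : Fin p × Fin p => q.1 < q.2)
  have hcard : (#P : ℝ) = N := by
    have h := congrArg (fun n : ℕ => (n : ℝ)) (card_filter_fst_lt_snd_mul_two p)
    push_cast [Nat.cast_sub (by omega : 1 ≤ p)] at h
    rw [hN]
    linarith
  have hN0 : N ≠ 0 := by
    rw [hN]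
    have : (2 : ℝ) ≤ p := by exact_mod_cast hp
    nlinarith
  have hpair : ∀ q ∈ P, ∫ ω, |Ystar q.1 q.2 ω - Y q.1 q.2 ω| ∂μ =
      2 * (A q.1 q.2 * (β * (1 - β)) + (1 - A q.1 q.2) * (α * (1 - α))) := by
    intro q hq
    have hlt : q.1 < q.2 := (mem_filter.mp hq).2
    rw [integral_abs_sub_of_bernMass (by split_ifs <;> linarith) (by split_ifs <;> linarith)
      (hYmeas _ _) (hYstarmeas _ _) (hY01 _ _) (hYstar01 _ _) (hjoint _ _ hlt),
      ← ite_eq_one_eq_mul_add_one_sub_mul (hA01 _ _)]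
    split_ifs <;> ring
  rw [integral_const_mul, integral_finsetSum P fun q _ => integrable_abs_sub_of_zero_one
      (hYmeas _ _) (hYstarmeas _ _) (hY01 _ _) (hYstar01 _ _),
    sum_congr rfl hpair, ← mul_sum, sum_add_distrib, ← sum_mul, ← sum_mul, sum_sub_distrib,
    sum_const, nsmul_eq_mul, mul_one, hcard, hδ]
  field_simp
  ring

/-- Under the noisy network model with two independent replicate observations
`Y` and `Y*` of the same true adjacency matrix `A`, the statistic
`û₂ = (2N)⁻¹ ∑_{i<j} |Y*ᵢⱼ − Yᵢⱼ|` has expectation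
`(1−δ)α(1−α) + δβ(1−β)`, where `N = p(p−1)/2` and `δ = N⁻¹ ∑_{i<j} Aᵢⱼ`. -/
theorem expectation_u2hat
    {Ω : Type*} [MeasurableSpace Ω] (μ : Measure Ω) [IsProbabilityMeasure μ]
    (p : ℕ) (hp : 2 ≤ p)
    (A : Fin p → Fin p → ℝ)
    (hA01 : ∀ i j, A i j = 0 ∨ A i j = 1)
    (hAsym : ∀ i j, A i j = A j i) (hAdiag : ∀ i, A i i = 0)
    (α β : ℝ) (hα0 : 0 ≤ α) (hα1 : α ≤ 1) (hβ0 : 0 ≤ β) (hβ1 : β ≤ 1)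
    (hαβ : α + β ≤ 1)
    (Y Ystar : Fin p → Fin p → Ω → ℝ)
    (hYmeas : ∀ i j, Measurable (Y i j)) (hYstarmeas : ∀ i j, Measurable (Ystar i j))
    (hY01 : ∀ i j ω, Y i j ω = 0 ∨ Y i j ω = 1)
    (hYstar01 : ∀ i j ω, Ystar i j ω = 0 ∨ Ystar i j ω = 1)
    (hjoint : ∀ i j, i < j → ∀ a b : ℝ, (a = 0 ∨ a = 1) → (b = 0 ∨ b = 1) →
      μ {ω | Y i j ω = a ∧ Ystar i j ω = b} =
        ENNReal.ofReal (bernMass (if A i j = 1 then 1 - β else α) a *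
          bernMass (if A i j = 1 then 1 - β else α) b))
    (N δ : ℝ)
    (hN : N = (p : ℝ) * ((p : ℝ) - 1) / 2)
    (hδ : δ = N⁻¹ * ∑ q ∈ univ.filter (fun q : Fin p × Fin p => q.1 < q.2), A q.1 q.2) :
    ∫ ω, (2 * N)⁻¹ * ∑ q ∈ univ.filter (fun q : Fin p × Fin p => q.1 < q.2),
        |Ystar q.1 q.2 ω - Y q.1 q.2 ω| ∂μ
      = (1 - δ) * α * (1 - α) + δ * β * (1 - β) :=
  expectation_u2hat_general μ p hp A hA01 α β hα0 hα1 hβ0 hβ1 Y Ystar hYmeas hYstarmeas hY01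
    hYstar01 hjoint N δ hN hδ
end

section
/- Under the noisy network model with three independent replicate observations (Y_{i,j}), (Y_{i,j,*}), (Y_{i,j,**}) of the same true adjacency matrix A, the statistic û₃ = (3N)^{-1} Σ_{i<j} I( Y_{i,j,**} − 2Y_{i,j,*} + Y_{i,j} ∈ {1, −2} ) satisfies E(û₃) = (1−δ)α(1−α)² + δβ²(1−β), where N = p(p−1)/2 and δ = N^{-1} Σ_{i<j} A_{i,j}. -/
/-!
For {0,1}-valued `Y, Y*, Y**`, the quantity `Y** − 2Y* + Y` lies in `{1, −2}` exactly when one of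
the three replicates equals 1 and the other two equal 0. For a pair `(i, j)` whose three replicates
are i.i.d. Bernoulli(`r`) this event has probability `3r(1 − r)²`, with `r = 1 − β` on an edge
and `r = α` off it. Averaging over the `N` pairs `i < j`, a proportion `δ` of which are edges,
gives the claimed expectation.
-/

open MeasureTheory Finset

lemma card_filter_fst_lt_snd (p : ℕ) : #{q : Fin p × Fin p | q.1 < q.2} = p.choose 2 := by
  simpa using Fintype.card_product_filter_lt (α := Fin p)

lemma ite_mix_mul_one_sub_sq {a : ℝ} (ha : a = 0 ∨ a = 1) (α β : ℝ) :
    (if a = 1 then 1 - β else α) * (1 - if a = 1 then 1 - β else α) ^ 2 =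
      a * (β ^ 2 * (1 - β)) + (1 - a) * (α * (1 - α) ^ 2) := by
  rcases ha with rfl | rfl <;> norm_num
  ring

section Indicator

variable {Ω : Type*} [MeasurableSpace Ω] {μ : Measure Ω} {P : Ω → Prop} [DecidablePred P]

lemma integral_ite_one (hP : MeasurableSet {ω | P ω}) :
    ∫ ω, (if P ω then (1 : ℝ) else 0) ∂μ = μ.real {ω | P ω} := by
  simpa [Set.indicator_apply] using integral_indicator_one (μ := μ) hP

lemma integrable_ite_one [IsFiniteMeasure μ] (hP : MeasurableSet {ω | P ω}) :
    Integrable (fun ω => if P ω then (1 : ℝ) else 0) μ := by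
  refine ((integrable_const (1 : ℝ)).indicator hP).congr (ae_of_all _ fun ω => ?_)
  simp [Set.indicator_apply]

end Indicator

section Replicates

variable {Ω : Type*} {X₁ X₂ X₃ : Ω → ℝ}

lemma setOf_u3_eq_preimage (h₁ : ∀ ω, X₁ ω = 0 ∨ X₁ ω = 1) (h₂ : ∀ ω, X₂ ω = 0 ∨ X₂ ω = 1)
    (h₃ : ∀ ω, X₃ ω = 0 ∨ X₃ ω = 1) :
    {ω | X₃ ω - 2 * X₂ ω + X₁ ω = 1 ∨ X₃ ω - 2 * X₂ ω + X₁ ω = -2} =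
      (fun ω => (X₁ ω, X₂ ω, X₃ ω)) ⁻¹'
        ↑({(1, 0, 0), (0, 0, 1), (0, 1, 0)} : Finset (ℝ × ℝ × ℝ)) := by
  ext ω
  rcases h₁ ω with h₁ | h₁ <;> rcases h₂ ω with h₂ | h₂ <;> rcases h₃ ω with h₃ | h₃ <;>
    norm_num [h₁, h₂, h₃]

lemma preimage_triple_singleton (a b c : ℝ) :
    (fun ω => (X₁ ω, X₂ ω, X₃ ω)) ⁻¹' {(a, b, c)} = {ω | X₁ ω = a ∧ X₂ ω = b ∧ X₃ ω = c} := by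
  ext ω
  simp

variable [MeasurableSpace Ω] {μ : Measure Ω}

lemma measurableSet_u3_event (hm₁ : Measurable X₁) (hm₂ : Measurable X₂) (hm₃ : Measurable X₃) :
    MeasurableSet {ω | X₃ ω - 2 * X₂ ω + X₁ ω = 1 ∨ X₃ ω - 2 * X₂ ω + X₁ ω = -2} := by
  have hm : Measurable fun ω => X₃ ω - 2 * X₂ ω + X₁ ω := by fun_prop
  exact (measurableSet_eq_fun hm measurable_const).union (measurableSet_eq_fun hm measurable_const)

lemma integral_u3_indicator [IsFiniteMeasure μ] (hm₁ : Measurable X₁) (hm₂ : Measurable X₂)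
    (hm₃ : Measurable X₃) (h₁ : ∀ ω, X₁ ω = 0 ∨ X₁ ω = 1) (h₂ : ∀ ω, X₂ ω = 0 ∨ X₂ ω = 1)
    (h₃ : ∀ ω, X₃ ω = 0 ∨ X₃ ω = 1) {q : ℝ} (hq : 0 ≤ q)
    (hlaw : ∀ a b c : ℝ, (a = 0 ∨ a = 1) → (b = 0 ∨ b = 1) → (c = 0 ∨ c = 1) →
      μ {ω | X₁ ω = a ∧ X₂ ω = b ∧ X₃ ω = c} =
        ENNReal.ofReal (bernMass q a * bernMass q b * bernMass q c)) :
    ∫ ω, (if X₃ ω - 2 * X₂ ω + X₁ ω = 1 ∨ X₃ ω - 2 * X₂ ω + X₁ ω = -2 then (1 : ℝ) else 0) ∂μ =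
      3 * (q * (1 - q) ^ 2) := by
  have atom : ∀ a b c : ℝ, (a = 0 ∨ a = 1) → (b = 0 ∨ b = 1) → (c = 0 ∨ c = 1) →
      bernMass q a * bernMass q b * bernMass q c = q * (1 - q) ^ 2 →
      μ.real ((fun ω => (X₁ ω, X₂ ω, X₃ ω)) ⁻¹' {(a, b, c)}) = q * (1 - q) ^ 2 := by
    intro a b c ha hb hc hmass
    rw [preimage_triple_singleton, measureReal_def, hlaw a b c ha hb hc, hmass,
      ENNReal.toReal_ofReal (by positivity)]
  rw [integral_ite_one (measurableSet_u3_event hm₁ hm₂ hm₃), setOf_u3_eq_preimage h₁ h₂ h₃,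
    ← sum_measureReal_preimage_singleton _
      fun y _ => (hm₁.prodMk (hm₂.prodMk hm₃)) (measurableSet_singleton y),
    sum_insert (by norm_num), sum_insert (by norm_num), sum_singleton,
    atom 1 0 0 (by norm_num) (by norm_num) (by norm_num) (by norm_num [bernMass]; ring),
    atom 0 0 1 (by norm_num) (by norm_num) (by norm_num) (by norm_num [bernMass]; ring),
    atom 0 1 0 (by norm_num) (by norm_num) (by norm_num) (by norm_num [bernMass]; ring)]
  ring

end Replicates

theorem expectation_u3hat_general
    {Ω : Type*} [MeasurableSpace Ω] (μ : Measure Ω) [IsProbabilityMeasure μ]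
    (p : ℕ) (hp : 2 ≤ p)
    (A : Fin p → Fin p → ℝ)
    (hA01 : ∀ i j, A i j = 0 ∨ A i j = 1)
    (α β : ℝ) (hα0 : 0 ≤ α) (hβ1 : β ≤ 1)
    (Y Ystar Ystarstar : Fin p → Fin p → Ω → ℝ)
    (hYmeas : ∀ i j, Measurable (Y i j)) (hYstarmeas : ∀ i j, Measurable (Ystar i j))
    (hYssmeas : ∀ i j, Measurable (Ystarstar i j))
    (hY01 : ∀ i j ω, Y i j ω = 0 ∨ Y i j ω = 1)
    (hYstar01 : ∀ i j ω, Ystar i j ω = 0 ∨ Ystar i j ω = 1)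
    (hYss01 : ∀ i j ω, Ystarstar i j ω = 0 ∨ Ystarstar i j ω = 1)
    (hjoint : ∀ i j, i < j → ∀ a b c : ℝ,
      (a = 0 ∨ a = 1) → (b = 0 ∨ b = 1) → (c = 0 ∨ c = 1) →
      μ {ω | Y i j ω = a ∧ Ystar i j ω = b ∧ Ystarstar i j ω = c} =
        ENNReal.ofReal (bernMass (if A i j = 1 then 1 - β else α) a *
          bernMass (if A i j = 1 then 1 - β else α) b *
          bernMass (if A i j = 1 then 1 - β else α) c))
    (N δ : ℝ)
    (hN : N = (p : ℝ) * ((p : ℝ) - 1) / 2)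
    (hδ : δ = N⁻¹ * ∑ q ∈ univ.filter (fun q : Fin p × Fin p => q.1 < q.2), A q.1 q.2) :
    ∫ ω, (3 * N)⁻¹ * ∑ q ∈ univ.filter (fun q : Fin p × Fin p => q.1 < q.2),
        (if Ystarstar q.1 q.2 ω - 2 * Ystar q.1 q.2 ω + Y q.1 q.2 ω = 1 ∨
            Ystarstar q.1 q.2 ω - 2 * Ystar q.1 q.2 ω + Y q.1 q.2 ω = -2
          then (1 : ℝ) else 0) ∂μ
      = (1 - δ) * α * (1 - α) ^ 2 + δ * β ^ 2 * (1 - β) := by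
  set T := univ.filter (fun q : Fin p × Fin p => q.1 < q.2)
  have hcard : (#T : ℝ) = N := by
    rw [card_filter_fst_lt_snd, Nat.cast_choose_two, hN]
  have hN0 : N ≠ 0 := by
    have : (2 : ℝ) ≤ p := by exact_mod_cast hp
    rw [hN]
    nlinarith
  have hsumA : ∑ q ∈ T, A q.1 q.2 = δ * N := by
    rw [hδ]
    field_simp
  have hpair : ∀ q ∈ T, ∫ ω, (if Ystarstar q.1 q.2 ω - 2 * Ystar q.1 q.2 ω + Y q.1 q.2 ω = 1 ∨
      Ystarstar q.1 q.2 ω - 2 * Ystar q.1 q.2 ω + Y q.1 q.2 ω = -2 then (1 : ℝ) else 0) ∂μ =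
        3 * (A q.1 q.2 * (β ^ 2 * (1 - β)) + (1 - A q.1 q.2) * (α * (1 - α) ^ 2)) := by
    intro q hq
    have hr : 0 ≤ if A q.1 q.2 = 1 then 1 - β else α := by split_ifs <;> linarith
    rw [integral_u3_indicator (hYmeas ..) (hYstarmeas ..) (hYssmeas ..) (hY01 q.1 q.2) (hYstar01 q.1 q.2)
      (hYss01 q.1 q.2) hr (hjoint _ _ (mem_filter.1 hq).2), ite_mix_mul_one_sub_sq (hA01 ..)]
  rw [integral_const_mul, integral_finsetSum T fun q _ => integrable_ite_one
      (measurableSet_u3_event (hYmeas ..) (hYstarmeas ..) (hYssmeas ..)),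
    sum_congr rfl hpair, ← mul_sum, sum_add_distrib, ← sum_mul, ← sum_mul, sum_sub_distrib,
    sum_const, nsmul_one, hsumA, hcard]
  field_simp
  ring

/-- Under the noisy network model with three independent replicate observations
`Y`, `Y*`, `Y**` of the same true adjacency matrix `A`, the statistic
`û₃ = (3N)⁻¹ ∑_{i<j} I(Y**ᵢⱼ − 2Y*ᵢⱼ + Yᵢⱼ ∈ {1, −2})` has expectation
`(1−δ)α(1−α)² + δβ²(1−β)`, where `N = p(p−1)/2` and `δ = N⁻¹ ∑_{i<j} Aᵢⱼ`. -/
theorem expectation_u3hat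
    {Ω : Type*} [MeasurableSpace Ω] (μ : Measure Ω) [IsProbabilityMeasure μ]
    (p : ℕ) (hp : 2 ≤ p)
    (A : Fin p → Fin p → ℝ)
    (hA01 : ∀ i j, A i j = 0 ∨ A i j = 1)
    (hAsym : ∀ i j, A i j = A j i) (hAdiag : ∀ i, A i i = 0)
    (α β : ℝ) (hα0 : 0 ≤ α) (hα1 : α ≤ 1) (hβ0 : 0 ≤ β) (hβ1 : β ≤ 1)
    (hαβ : α + β ≤ 1)
    (Y Ystar Ystarstar : Fin p → Fin p → Ω → ℝ)
    (hYmeas : ∀ i j, Measurable (Y i j)) (hYstarmeas : ∀ i j, Measurable (Ystar i j))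
    (hYssmeas : ∀ i j, Measurable (Ystarstar i j))
    (hY01 : ∀ i j ω, Y i j ω = 0 ∨ Y i j ω = 1)
    (hYstar01 : ∀ i j ω, Ystar i j ω = 0 ∨ Ystar i j ω = 1)
    (hYss01 : ∀ i j ω, Ystarstar i j ω = 0 ∨ Ystarstar i j ω = 1)
    (hjoint : ∀ i j, i < j → ∀ a b c : ℝ,
      (a = 0 ∨ a = 1) → (b = 0 ∨ b = 1) → (c = 0 ∨ c = 1) →
      μ {ω | Y i j ω = a ∧ Ystar i j ω = b ∧ Ystarstar i j ω = c} =
        ENNReal.ofReal (bernMass (if A i j = 1 then 1 - β else α) a *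
          bernMass (if A i j = 1 then 1 - β else α) b *
          bernMass (if A i j = 1 then 1 - β else α) c))
    (N δ : ℝ)
    (hN : N = (p : ℝ) * ((p : ℝ) - 1) / 2)
    (hδ : δ = N⁻¹ * ∑ q ∈ univ.filter (fun q : Fin p × Fin p => q.1 < q.2), A q.1 q.2) :
    ∫ ω, (3 * N)⁻¹ * ∑ q ∈ univ.filter (fun q : Fin p × Fin p => q.1 < q.2),
        (if Ystarstar q.1 q.2 ω - 2 * Ystar q.1 q.2 ω + Y q.1 q.2 ω = 1 ∨
            Ystarstar q.1 q.2 ω - 2 * Ystar q.1 q.2 ω + Y q.1 q.2 ω = -2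
          then (1 : ℝ) else 0) ∂μ
      = (1 - δ) * α * (1 - α) ^ 2 + δ * β ^ 2 * (1 - β) :=
  expectation_u3hat_general μ p hp A hA01 α β hα0 hβ1 Y Ystar Ystarstar hYmeas hYstarmeas hYssmeas
    hY01 hYstar01 hYss01 hjoint N δ hN hδ
end

section
/- (Exact second-moment identities from Lemma 1, entries for û₁ and û₂.) Under the noisy network model with two independent replicates, set û₁ = Ȳ = N^{-1} Σ_{i<j} Y_{i,j}, û₂ = (2N)^{-1} Σ_{i<j} |Y_{i,j,*} − Y_{i,j}|, u₁ = E(û₁), u₂ = E(û₂), κ₁ = α(1−α), κ₂ = β(1−β). Then N·E{(û₁−u₁)²} = δκ₂ + (1−δ)κ₁, N·E{(û₂−u₂)²} = δκ₂(1/2 − κ₂) + (1−δ)κ₁(1/2 − κ₁), and N·E{(û₁−u₁)(û₂−u₂)} = δκ₂(β − 1/2) + (1−δ)κ₁(1/2 − α). -/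
open MeasureTheory ProbabilityTheory Finset

/-!
The centred averages `û₁ − u₁` and `û₂ − u₂` are sums over vertex pairs of centred functions of
the pairs `(Yᵢⱼ, Y*ᵢⱼ)`, which are independent across pairs, so every second moment is a sum of
per-pair covariances. Each pair is an i.i.d. Bernoulli(`π`) pair with `π = 1 − β` on edges and
`π = α` on non-edges, so `|Y* − Y|` is Bernoulli(`2π(1−π)`) and the per-pair covariances are
polynomials in `π`: `π(1−π)`, `2π(1−π)(1 − 2π(1−π))` and `π(1−π)(1−2π)`. Evaluated at `1 − β`
and `α` these are `κ₂, 2κ₂(1−2κ₂), κ₂(2β−1)` and `κ₁, 2κ₁(1−2κ₁), κ₁(1−2α)`, and there are `Nδ`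
edges among the `N` pairs.
-/

section FiniteRange

variable {Ω α : Type*} {V : Ω → α} {S : Finset α}

lemma comp_eq_sum_indicator (hS : ∀ ω, V ω ∈ S) (F : α → ℝ) (ω : Ω) :
    F (V ω) = ∑ s ∈ S, (V ⁻¹' {s}).indicator (fun _ => F s) ω := by
  classical
  rw [sum_eq_single_of_mem (V ω) (hS ω) fun s _ hs => ?_]
  · simp
  · simp [Ne.symm hs]

variable [MeasurableSpace Ω] {μ : Measure Ω} [IsFiniteMeasure μ]
  [MeasurableSpace α] [MeasurableSingletonClass α]

lemma integral_comp_eq_sum (hV : Measurable V) (hS : ∀ ω, V ω ∈ S) (F : α → ℝ) :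
    ∫ ω, F (V ω) ∂μ = ∑ s ∈ S, μ.real (V ⁻¹' {s}) * F s := by
  have hmeas (s : α) : MeasurableSet (V ⁻¹' {s}) := hV (measurableSet_singleton s)
  simp_rw [comp_eq_sum_indicator hS F]
  rw [integral_finsetSum _ fun s _ => (integrable_const _).indicator (hmeas s)]
  exact sum_congr rfl fun s _ => by rw [integral_indicator_const _ (hmeas s), smul_eq_mul]

lemma memLp_comp_of_mem_finset (hV : Measurable V) (hS : ∀ ω, V ω ∈ S) (F : α → ℝ)
    (p : ENNReal) : MemLp (fun ω => F (V ω)) p μ := by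
  simp_rw [comp_eq_sum_indicator hS F]
  exact memLp_finsetSum S fun s _ =>
    memLp_indicator_const p (hV (measurableSet_singleton s)) _ (Or.inr (measure_ne_top _ _))

end FiniteRange

lemma covariance_sum_sum_of_indepFun {Ω ι : Type*} [MeasurableSpace Ω] {μ : Measure Ω}
    [IsFiniteMeasure μ] {s : Finset ι} {X Y : ι → Ω → ℝ}
    (hX : ∀ i ∈ s, MemLp (X i) 2 μ) (hY : ∀ i ∈ s, MemLp (Y i) 2 μ)
    (hXY : ∀ i ∈ s, ∀ j ∈ s, i ≠ j → X i ⟂ᵢ[μ] Y j) :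
    cov[fun ω => ∑ i ∈ s, X i ω, fun ω => ∑ i ∈ s, Y i ω; μ] = ∑ i ∈ s, cov[X i, Y i; μ] := by
  rw [covariance_fun_sum_fun_sum' hX hY]
  exact sum_congr rfl fun i hi => sum_eq_single_of_mem i hi fun j hj hji =>
    (hXY i hi j hj hji.symm).covariance_eq_zero (hX i hi) (hY j hj)

lemma sum_apply_ite_eq_of_zero_or_one {ι : Type*} {s : Finset ι} {a : ι → ℝ}
    (ha : ∀ i ∈ s, a i = 0 ∨ a i = 1) (f : ℝ → ℝ) (x y : ℝ) :
    ∑ i ∈ s, f (if a i = 1 then x else y)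
      = (∑ i ∈ s, a i) * f x + (#s - ∑ i ∈ s, a i) * f y := by
  have hterm : ∀ i ∈ s, f (if a i = 1 then x else y) = a i * f x + (1 - a i) * f y := by
    intro i hi
    rcases ha i hi with h | h <;> simp [h]
  rw [sum_congr rfl hterm, sum_add_distrib, ← sum_mul, ← sum_mul, sum_sub_distrib, sum_const,
    nsmul_one]

lemma bernMass_nonneg {q : ℝ} (h0 : 0 ≤ q) (h1 : q ≤ 1) (a : ℝ) : 0 ≤ bernMass q a := by
  unfold bernMass
  split_ifs <;> linarith

noncomputable def bernPairMean (q : ℝ) (F : ℝ × ℝ → ℝ) : ℝ :=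
  ∑ a ∈ ({0, 1} : Finset ℝ), ∑ b ∈ ({0, 1} : Finset ℝ), bernMass q a * bernMass q b * F (a, b)

noncomputable def bernPairCov (q : ℝ) (φ ψ : ℝ × ℝ → ℝ) : ℝ :=
  bernPairMean q fun v => (φ v - bernPairMean q φ) * (ψ v - bernPairMean q ψ)

structure IsBernoulliPair {Ω : Type*} [MeasurableSpace Ω] (μ : Measure Ω) (X Z : Ω → ℝ)
    (q : ℝ) : Prop where
  measurable_fst : Measurable X
  measurable_snd : Measurable Z
  fst_eq_zero_or_one : ∀ ω, X ω = 0 ∨ X ω = 1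
  snd_eq_zero_or_one : ∀ ω, Z ω = 0 ∨ Z ω = 1
  nonneg : 0 ≤ q
  le_one : q ≤ 1
  measure_eq : ∀ a b : ℝ, (a = 0 ∨ a = 1) → (b = 0 ∨ b = 1) →
    μ {ω | X ω = a ∧ Z ω = b} = ENNReal.ofReal (bernMass q a * bernMass q b)

namespace IsBernoulliPair

variable {Ω : Type*} [MeasurableSpace Ω] {μ : Measure Ω} {X Z : Ω → ℝ} {q : ℝ}

lemma measurable_pair (h : IsBernoulliPair μ X Z q) : Measurable fun ω => (X ω, Z ω) :=
  h.measurable_fst.prodMk h.measurable_snd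

lemma pair_mem (h : IsBernoulliPair μ X Z q) (ω : Ω) :
    (X ω, Z ω) ∈ ({0, 1} : Finset ℝ) ×ˢ ({0, 1} : Finset ℝ) := by
  simp [h.fst_eq_zero_or_one ω, h.snd_eq_zero_or_one ω]

lemma memLp_comp [IsFiniteMeasure μ] (h : IsBernoulliPair μ X Z q) (F : ℝ × ℝ → ℝ)
    (p : ENNReal) : MemLp (fun ω => F (X ω, Z ω)) p μ :=
  memLp_comp_of_mem_finset h.measurable_pair h.pair_mem F p

lemma integral_comp [IsFiniteMeasure μ] (h : IsBernoulliPair μ X Z q) (F : ℝ × ℝ → ℝ) :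
    ∫ ω, F (X ω, Z ω) ∂μ = bernPairMean q F := by
  rw [integral_comp_eq_sum h.measurable_pair h.pair_mem, sum_product, bernPairMean]
  refine sum_congr rfl fun a ha => sum_congr rfl fun b hb => ?_
  have hq : 0 ≤ bernMass q a * bernMass q b :=
    mul_nonneg (bernMass_nonneg h.nonneg h.le_one a) (bernMass_nonneg h.nonneg h.le_one b)
  have hpre : (fun ω => (X ω, Z ω)) ⁻¹' {(a, b)} = {ω | X ω = a ∧ Z ω = b} := by
    ext ω; simp
  rw [measureReal_def, hpre, h.measure_eq a b (by simpa using ha) (by simpa using hb),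
    ENNReal.toReal_ofReal hq]

lemma covariance_comp [IsFiniteMeasure μ] (h : IsBernoulliPair μ X Z q) (φ ψ : ℝ × ℝ → ℝ) :
    cov[fun ω => φ (X ω, Z ω), fun ω => ψ (X ω, Z ω); μ] = bernPairCov q φ ψ := by
  rw [covariance, h.integral_comp φ, h.integral_comp ψ]
  exact h.integral_comp fun v => (φ v - bernPairMean q φ) * (ψ v - bernPairMean q ψ)

end IsBernoulliPair

lemma covariance_sum_of_isBernoulliPair {Ω ι : Type*} [MeasurableSpace Ω] {μ : Measure Ω}
    [IsFiniteMeasure μ] {s : Finset ι} {X Z : ι → Ω → ℝ} {q : ι → ℝ}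
    (hpair : ∀ i ∈ s, IsBernoulliPair μ (X i) (Z i) (q i))
    (hind : ∀ i ∈ s, ∀ j ∈ s, i ≠ j →
      (fun ω => (X i ω, Z i ω)) ⟂ᵢ[μ] (fun ω => (X j ω, Z j ω)))
    {φ ψ : ℝ × ℝ → ℝ} (hφ : Measurable φ) (hψ : Measurable ψ) :
    cov[fun ω => ∑ i ∈ s, φ (X i ω, Z i ω), fun ω => ∑ i ∈ s, ψ (X i ω, Z i ω); μ]
      = ∑ i ∈ s, bernPairCov (q i) φ ψ := by
  rw [covariance_sum_sum_of_indepFun (fun i hi => (hpair i hi).memLp_comp φ 2)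
      (fun i hi => (hpair i hi).memLp_comp ψ 2)
      (fun i hi j hj hij => (hind i hi j hj hij).comp hφ hψ)]
  exact sum_congr rfl fun i hi => (hpair i hi).covariance_comp φ ψ

lemma bernPairMean_eq (q : ℝ) (F : ℝ × ℝ → ℝ) :
    bernPairMean q F = (1 - q) ^ 2 * F (0, 0) + (1 - q) * q * F (0, 1)
      + q * (1 - q) * F (1, 0) + q ^ 2 * F (1, 1) := by
  rw [bernPairMean, sum_pair zero_ne_one, sum_pair zero_ne_one, sum_pair zero_ne_one]
  simp only [bernMass, if_pos, if_neg zero_ne_one]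
  ring

lemma bernPairCov_fst_fst (q : ℝ) : bernPairCov q Prod.fst Prod.fst = q * (1 - q) := by
  simp only [bernPairCov, bernPairMean_eq]
  ring

lemma bernPairCov_absDiff_absDiff (q : ℝ) :
    bernPairCov q (fun v => |v.2 - v.1|) (fun v => |v.2 - v.1|)
      = 2 * q * (1 - q) * (1 - 2 * q * (1 - q)) := by
  simp only [bernPairCov, bernPairMean_eq, sub_self, sub_zero, zero_sub, abs_zero, abs_neg,
    abs_one]
  ring

lemma bernPairCov_fst_absDiff (q : ℝ) :
    bernPairCov q Prod.fst (fun v => |v.2 - v.1|) = q * (1 - q) * (1 - 2 * q) := by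
  simp only [bernPairCov, bernPairMean_eq, sub_self, sub_zero, zero_sub, abs_zero, abs_neg,
    abs_one]
  ring

theorem second_moment_identities_u1_u2_general
    {Ω : Type*} [MeasurableSpace Ω] (μ : Measure Ω) [IsProbabilityMeasure μ]
    (p : ℕ) (hp : 2 ≤ p)
    (A : Fin p → Fin p → ℝ)
    (hA01 : ∀ i j, A i j = 0 ∨ A i j = 1)
    (α β : ℝ) (hα0 : 0 ≤ α) (hα1 : α ≤ 1) (hβ0 : 0 ≤ β) (hβ1 : β ≤ 1)
    (Y Ystar : Fin p → Fin p → Ω → ℝ)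
    (hYmeas : ∀ i j, Measurable (Y i j)) (hYstarmeas : ∀ i j, Measurable (Ystar i j))
    (hY01 : ∀ i j ω, Y i j ω = 0 ∨ Y i j ω = 1)
    (hYstar01 : ∀ i j ω, Ystar i j ω = 0 ∨ Ystar i j ω = 1)
    -- within each pair `i < j`, the two replicates are i.i.d. Bernoulli with
    -- success probability `1−β` if `Aᵢⱼ = 1` and `α` if `Aᵢⱼ = 0`
    (hjoint : ∀ i j, i < j → ∀ a b : ℝ, (a = 0 ∨ a = 1) → (b = 0 ∨ b = 1) →
      μ {ω | Y i j ω = a ∧ Ystar i j ω = b} =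
        ENNReal.ofReal (bernMass (if A i j = 1 then 1 - β else α) a *
          bernMass (if A i j = 1 then 1 - β else α) b))
    -- the pairs `(Yᵢⱼ, Y*ᵢⱼ)` are independent across the unordered vertex pairs
    (hindep : iIndepFun (m := fun _ : EdgeIdx p => (inferInstance : MeasurableSpace (ℝ × ℝ)))
      (fun e ω => (Y e.1.1 e.1.2 ω, Ystar e.1.1 e.1.2 ω)) μ)
    (N δ κ₁ κ₂ : ℝ)
    (hN : N = (p : ℝ) * ((p : ℝ) - 1) / 2)
    (hδ : δ = N⁻¹ * ∑ q ∈ univ.filter (fun q : Fin p × Fin p => q.1 < q.2), A q.1 q.2)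
    (hκ₁ : κ₁ = α * (1 - α)) (hκ₂ : κ₂ = β * (1 - β))
    (u₁ u₂ : ℝ)
    (hu₁ : u₁ = ∫ ω, N⁻¹ * ∑ q ∈ univ.filter (fun q : Fin p × Fin p => q.1 < q.2),
      Y q.1 q.2 ω ∂μ)
    (hu₂ : u₂ = ∫ ω, (2 * N)⁻¹ * ∑ q ∈ univ.filter (fun q : Fin p × Fin p => q.1 < q.2),
      |Ystar q.1 q.2 ω - Y q.1 q.2 ω| ∂μ) :
    N * ∫ ω, ((N⁻¹ * ∑ q ∈ univ.filter (fun q : Fin p × Fin p => q.1 < q.2),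
          Y q.1 q.2 ω) - u₁) ^ 2 ∂μ
        = δ * κ₂ + (1 - δ) * κ₁ ∧
    N * ∫ ω, ((2 * N)⁻¹ * ∑ q ∈ univ.filter (fun q : Fin p × Fin p => q.1 < q.2),
          |Ystar q.1 q.2 ω - Y q.1 q.2 ω| - u₂) ^ 2 ∂μ
        = δ * κ₂ * (1 / 2 - κ₂) + (1 - δ) * κ₁ * (1 / 2 - κ₁) ∧
    N * ∫ ω, ((N⁻¹ * ∑ q ∈ univ.filter (fun q : Fin p × Fin p => q.1 < q.2),
            Y q.1 q.2 ω) - u₁) *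
          ((2 * N)⁻¹ * ∑ q ∈ univ.filter (fun q : Fin p × Fin p => q.1 < q.2),
            |Ystar q.1 q.2 ω - Y q.1 q.2 ω| - u₂) ∂μ
        = δ * κ₂ * (β - 1 / 2) + (1 - δ) * κ₁ * (1 / 2 - α) := by
  subst hκ₁ hκ₂
  set E := univ.filter (fun q : Fin p × Fin p => q.1 < q.2) with hE
  have hcard : (#E : ℝ) = N := by
    rw [hN, hE, Fintype.card_product_filter_lt, Fintype.card_fin, Nat.cast_choose_two]
  have hN0 : N ≠ 0 := by
    have : (2 : ℝ) ≤ p := mod_cast hp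
    rw [hN]; nlinarith
  have hsumA : ∑ q ∈ E, A q.1 q.2 = N * δ := by rw [hδ, mul_inv_cancel_left₀ hN0]
  have hcov (c c' : ℝ) (φ ψ : ℝ × ℝ → ℝ) (hφ : Measurable φ) (hψ : Measurable ψ) :
      N * cov[fun ω => c * ∑ q ∈ E, φ (Y q.1 q.2 ω, Ystar q.1 q.2 ω),
        fun ω => c' * ∑ q ∈ E, ψ (Y q.1 q.2 ω, Ystar q.1 q.2 ω); μ]
        = c * c' * N ^ 2 * (δ * bernPairCov (1 - β) φ ψ + (1 - δ) * bernPairCov α φ ψ) := by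
    have hpair (q) (hq : q ∈ E) : IsBernoulliPair μ (Y q.1 q.2) (Ystar q.1 q.2)
        (if A q.1 q.2 = 1 then 1 - β else α) :=
      ⟨hYmeas _ _, hYstarmeas _ _, hY01 _ _, hYstar01 _ _, by split_ifs <;> linarith,
        by split_ifs <;> linarith, hjoint _ _ (mem_filter.1 hq).2⟩
    have hind (q) (hq : q ∈ E) (q') (hq' : q' ∈ E) (hne : q ≠ q') :=
      hindep.indepFun (i := ⟨q, (mem_filter.1 hq).2⟩) (j := ⟨q', (mem_filter.1 hq').2⟩)
        (by simpa [Subtype.ext_iff] using hne)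
    rw [covariance_const_mul_left, covariance_const_mul_right,
      covariance_sum_of_isBernoulliPair hpair hind hφ hψ,
      sum_apply_ite_eq_of_zero_or_one (a := fun q : Fin p × Fin p => A q.1 q.2)
        (fun q _ => hA01 q.1 q.2)
        (bernPairCov · φ ψ), hsumA, hcard]
    ring
  have hfst : Measurable (Prod.fst : ℝ × ℝ → ℝ) := measurable_fst
  have habs : Measurable fun v : ℝ × ℝ => |v.2 - v.1| := by fun_prop
  refine ⟨?_, ?_, ?_⟩
  · simp only [hu₁, sq]
    refine (hcov _ _ _ _ hfst hfst).trans ?_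
    simp only [bernPairCov_fst_fst]; field_simp; ring
  · simp only [hu₂, sq]
    refine (hcov _ _ _ _ habs habs).trans ?_
    simp only [bernPairCov_absDiff_absDiff]; field_simp; ring
  · simp only [hu₁, hu₂]
    refine (hcov _ _ _ _ hfst habs).trans ?_
    simp only [bernPairCov_fst_absDiff]; field_simp; ring

/-- Exact second-moment identities (Lemma 1, entries for `û₁` and `û₂`): under the
noisy network model with two independent replicates, with `û₁ = N⁻¹ ∑_{i<j} Yᵢⱼ`,
`û₂ = (2N)⁻¹ ∑_{i<j} |Y*ᵢⱼ − Yᵢⱼ|`, `u₁ = E(û₁)`, `u₂ = E(û₂)`, `κ₁ = α(1−α)`,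
`κ₂ = β(1−β)`, one has `N·E{(û₁−u₁)²} = δκ₂ + (1−δ)κ₁`,
`N·E{(û₂−u₂)²} = δκ₂(1/2−κ₂) + (1−δ)κ₁(1/2−κ₁)`, and
`N·E{(û₁−u₁)(û₂−u₂)} = δκ₂(β−1/2) + (1−δ)κ₁(1/2−α)`. -/
theorem second_moment_identities_u1_u2
    {Ω : Type*} [MeasurableSpace Ω] (μ : Measure Ω) [IsProbabilityMeasure μ]
    (p : ℕ) (hp : 2 ≤ p)
    (A : Fin p → Fin p → ℝ)
    (hA01 : ∀ i j, A i j = 0 ∨ A i j = 1)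
    (hAsym : ∀ i j, A i j = A j i) (hAdiag : ∀ i, A i i = 0)
    (α β : ℝ) (hα0 : 0 ≤ α) (hα1 : α ≤ 1) (hβ0 : 0 ≤ β) (hβ1 : β ≤ 1)
    (hαβ : α + β ≤ 1)
    (Y Ystar : Fin p → Fin p → Ω → ℝ)
    (hYmeas : ∀ i j, Measurable (Y i j)) (hYstarmeas : ∀ i j, Measurable (Ystar i j))
    (hY01 : ∀ i j ω, Y i j ω = 0 ∨ Y i j ω = 1)
    (hYstar01 : ∀ i j ω, Ystar i j ω = 0 ∨ Ystar i j ω = 1)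
    -- within each pair `i < j`, the two replicates are i.i.d. Bernoulli with
    -- success probability `1−β` if `Aᵢⱼ = 1` and `α` if `Aᵢⱼ = 0`
    (hjoint : ∀ i j, i < j → ∀ a b : ℝ, (a = 0 ∨ a = 1) → (b = 0 ∨ b = 1) →
      μ {ω | Y i j ω = a ∧ Ystar i j ω = b} =
        ENNReal.ofReal (bernMass (if A i j = 1 then 1 - β else α) a *
          bernMass (if A i j = 1 then 1 - β else α) b))
    -- the pairs `(Yᵢⱼ, Y*ᵢⱼ)` are independent across the unordered vertex pairs
    (hindep : iIndepFun (m := fun _ : EdgeIdx p => (inferInstance : MeasurableSpace (ℝ × ℝ)))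
      (fun e ω => (Y e.1.1 e.1.2 ω, Ystar e.1.1 e.1.2 ω)) μ)
    (N δ κ₁ κ₂ : ℝ)
    (hN : N = (p : ℝ) * ((p : ℝ) - 1) / 2)
    (hδ : δ = N⁻¹ * ∑ q ∈ univ.filter (fun q : Fin p × Fin p => q.1 < q.2), A q.1 q.2)
    (hκ₁ : κ₁ = α * (1 - α)) (hκ₂ : κ₂ = β * (1 - β))
    (u₁ u₂ : ℝ)
    (hu₁ : u₁ = ∫ ω, N⁻¹ * ∑ q ∈ univ.filter (fun q : Fin p × Fin p => q.1 < q.2),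
      Y q.1 q.2 ω ∂μ)
    (hu₂ : u₂ = ∫ ω, (2 * N)⁻¹ * ∑ q ∈ univ.filter (fun q : Fin p × Fin p => q.1 < q.2),
      |Ystar q.1 q.2 ω - Y q.1 q.2 ω| ∂μ) :
    N * ∫ ω, ((N⁻¹ * ∑ q ∈ univ.filter (fun q : Fin p × Fin p => q.1 < q.2),
          Y q.1 q.2 ω) - u₁) ^ 2 ∂μ
        = δ * κ₂ + (1 - δ) * κ₁ ∧
    N * ∫ ω, ((2 * N)⁻¹ * ∑ q ∈ univ.filter (fun q : Fin p × Fin p => q.1 < q.2),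
          |Ystar q.1 q.2 ω - Y q.1 q.2 ω| - u₂) ^ 2 ∂μ
        = δ * κ₂ * (1 / 2 - κ₂) + (1 - δ) * κ₁ * (1 / 2 - κ₁) ∧
    N * ∫ ω, ((N⁻¹ * ∑ q ∈ univ.filter (fun q : Fin p × Fin p => q.1 < q.2),
            Y q.1 q.2 ω) - u₁) *
          ((2 * N)⁻¹ * ∑ q ∈ univ.filter (fun q : Fin p × Fin p => q.1 < q.2),
            |Ystar q.1 q.2 ω - Y q.1 q.2 ω| - u₂) ∂μ
        = δ * κ₂ * (β - 1 / 2) + (1 - δ) * κ₁ * (1 / 2 - α) :=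
  second_moment_identities_u1_u2_general μ p hp A hA01 α β hα0 hα1 hβ0 hβ1 Y Ystar hYmeas hYstarmeas
    hY01 hYstar01 hjoint hindep N δ κ₁ κ₂ hN hδ hκ₁ hκ₂ u₁ u₂ hu₁ hu₂
end

section
/- (Exact second-moment identities from Lemma 1, entries involving û₃.) Under the noisy network model with three independent replicates, set û₁ = N^{-1} Σ_{i<j} Y_{i,j}, û₂ = (2N)^{-1} Σ_{i<j} |Y_{i,j,*} − Y_{i,j}|, û₃ = (3N)^{-1} Σ_{i<j} I( Y_{i,j,**} − 2Y_{i,j,*} + Y_{i,j} ∈ {1,−2} ), u_k = E(û_k) for k = 1,2,3, κ₁ = α(1−α), κ₂ = β(1−β). Then N·E{(û₃−u₃)²} = δβκ₂(1/3 − βκ₂) + (1−δ)κ₁(1−α){1/3 − κ₁(1−α)}, N·E{(û₁−u₁)(û₃−u₃)} = δκ₂(β²/3 − 2κ₂/3) + (1−δ)κ₁{(1−α)²/3 − 2κ₁/3}, and N·E{(û₂−u₂)(û₃−u₃)} = δβκ₂(1/3 − κ₂) + (1−δ)(1−α)κ₁(1/3 − κ₁). -/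
open MeasureTheory ProbabilityTheory Finset

section FiniteRange

variable {Ω β : Type*} {X : Ω → β} {S : Finset β}

lemma comp_eq_sum_indicator_preimage (hS : ∀ ω, X ω ∈ S) (f : β → ℝ) :
    (fun ω ↦ f (X ω)) = fun ω ↦ ∑ s ∈ S, (X ⁻¹' {s}).indicator (fun _ ↦ f s) ω := by
  ext ω
  rw [Finset.sum_eq_single_of_mem (X ω) (hS ω) fun s _ hs ↦ by simp [Ne.symm hs]]
  simp

variable [MeasurableSpace Ω] {μ : Measure Ω} [MeasurableSpace β] [MeasurableSingletonClass β]

lemma integral_comp_eq_sum_of_mem [IsFiniteMeasure μ] (hX : Measurable X) (hS : ∀ ω, X ω ∈ S)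
    (f : β → ℝ) : ∫ ω, f (X ω) ∂μ = ∑ s ∈ S, μ.real (X ⁻¹' {s}) * f s := by
  rw [comp_eq_sum_indicator_preimage hS f, integral_finsetSum _ fun s _ ↦
    (integrable_const _).indicator (hX (measurableSet_singleton s))]
  simp [integral_indicator_const _ (hX (measurableSet_singleton _))]

lemma memLp_comp_of_mem [IsFiniteMeasure μ] (hX : Measurable X) (hS : ∀ ω, X ω ∈ S)
    (f : β → ℝ) (r : ENNReal) : MemLp (fun ω ↦ f (X ω)) r μ := by
  refine MemLp.of_bound ?_ (∑ s ∈ S, ‖f s‖) (Filter.Eventually.of_forall fun ω ↦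
    Finset.single_le_sum (f := fun s ↦ ‖f s‖) (fun _ _ ↦ norm_nonneg _) (hS ω))
  rw [comp_eq_sum_indicator_preimage hS f]
  exact (Finset.measurable_sum _ fun s _ ↦
    measurable_const.indicator (hX (measurableSet_singleton s))).aestronglyMeasurable

end FiniteRange

lemma covariance_sum_comp_of_iIndepFun {Ω ι β : Type*} [MeasurableSpace Ω] {μ : Measure Ω}
    [IsFiniteMeasure μ] [Fintype ι] [MeasurableSpace β] {V : ι → Ω → β} (hV : iIndepFun V μ)
    {f g : β → ℝ} (hf : Measurable f) (hg : Measurable g)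
    (hfV : ∀ i, MemLp (fun ω ↦ f (V i ω)) 2 μ) (hgV : ∀ i, MemLp (fun ω ↦ g (V i ω)) 2 μ) :
    cov[fun ω ↦ ∑ i, f (V i ω), fun ω ↦ ∑ i, g (V i ω); μ] =
      ∑ i, cov[fun ω ↦ f (V i ω), fun ω ↦ g (V i ω); μ] := by
  rw [covariance_fun_sum_fun_sum hfV hgV]
  refine Finset.sum_congr rfl fun i _ ↦ Finset.sum_eq_single i (fun j _ hji ↦ ?_) (by simp)
  exact ((hV.indepFun hji.symm).comp hf hg).covariance_eq_zero (hfV i) (hgV j)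

lemma sum_apply_ite_eq_one {ι : Type*} (s : Finset ι) {a : ι → ℝ}
    (ha : ∀ i ∈ s, a i = 0 ∨ a i = 1) (F : ℝ → ℝ) (x y : ℝ) :
    ∑ i ∈ s, F (if a i = 1 then x else y) = (∑ i ∈ s, a i) * F x + (#s - ∑ i ∈ s, a i) * F y := by
  rw [Finset.sum_mul, Finset.card_eq_sum_ones, Nat.cast_sum, ← Finset.sum_sub_distrib,
    Finset.sum_mul, ← Finset.sum_add_distrib]
  refine Finset.sum_congr rfl fun i hi ↦ ?_
  rcases ha i hi with h | h <;> simp [h]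

lemma card_edgeIdx (p : ℕ) : (Fintype.card (EdgeIdx p) : ℝ) = p * (p - 1) / 2 := by
  rw [Fintype.card_subtype, ← Finset.univ_product_univ, Finset.card_product_filter_lt,
    Finset.card_univ, Fintype.card_fin, Nat.cast_choose_two]

lemma choose_two_cast_ne_zero {p : ℕ} (hp : 2 ≤ p) : (p : ℝ) * (p - 1) / 2 ≠ 0 := by
  have : (2 : ℝ) ≤ p := by exact_mod_cast hp
  apply div_ne_zero _ two_ne_zero
  nlinarith

lemma sum_edgeIdx_apply_ite {p : ℕ} (hp : 2 ≤ p) {A : Fin p → Fin p → ℝ}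
    (hA01 : ∀ i j, A i j = 0 ∨ A i j = 1) {N δ : ℝ} (hN : N = (p : ℝ) * ((p : ℝ) - 1) / 2)
    (hδ : δ = N⁻¹ * ∑ q ∈ univ.filter (fun q : Fin p × Fin p => q.1 < q.2), A q.1 q.2)
    (F : ℝ → ℝ) (x y : ℝ) :
    ∑ e : EdgeIdx p, F (if A e.1.1 e.1.2 = 1 then x else y) =
      δ * N * F x + (1 - δ) * N * F y := by
  have hN0 : N ≠ 0 := hN ▸ choose_two_cast_ne_zero hp
  rw [sum_apply_ite_eq_one _ (fun e _ ↦ hA01 _ _), card_univ, card_edgeIdx, ← hN, hδ,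
    Finset.sum_subtype (p := fun q : Fin p × Fin p ↦ q.1 < q.2) _ (by simp)]
  field_simp

noncomputable def binaryCube : Finset (ℝ × ℝ × ℝ) := {0, 1} ×ˢ {0, 1} ×ˢ {0, 1}

noncomputable def bernTripleMass (q : ℝ) (v : ℝ × ℝ × ℝ) : ℝ :=
  bernMass q v.1 * bernMass q v.2.1 * bernMass q v.2.2

noncomputable def bernTripleMean (q : ℝ) (f : ℝ × ℝ × ℝ → ℝ) : ℝ :=
  ∑ v ∈ binaryCube, bernTripleMass q v * f v

noncomputable def bernTripleCov (q : ℝ) (f g : ℝ × ℝ × ℝ → ℝ) : ℝ :=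
  bernTripleMean q (f * g) - bernTripleMean q f * bernTripleMean q g

lemma mem_binaryCube {v : ℝ × ℝ × ℝ} :
    v ∈ binaryCube ↔ (v.1 = 0 ∨ v.1 = 1) ∧ (v.2.1 = 0 ∨ v.2.1 = 1) ∧ (v.2.2 = 0 ∨ v.2.2 = 1) := by
  simp [binaryCube]

lemma bernTripleMass_nonneg {q : ℝ} (hq0 : 0 ≤ q) (hq1 : q ≤ 1) (v : ℝ × ℝ × ℝ) :
    0 ≤ bernTripleMass q v := by
  have hmass (a : ℝ) : 0 ≤ bernMass q a := by unfold bernMass; split_ifs <;> linarith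
  exact mul_nonneg (mul_nonneg (hmass _) (hmass _)) (hmass _)

lemma bernTripleMean_eq (q : ℝ) (f : ℝ × ℝ × ℝ → ℝ) :
    bernTripleMean q f =
      (1 - q) ^ 3 * f (0, 0, 0) + q * (1 - q) ^ 2 * (f (1, 0, 0) + f (0, 1, 0) + f (0, 0, 1)) +
        q ^ 2 * (1 - q) * (f (1, 1, 0) + f (1, 0, 1) + f (0, 1, 1)) + q ^ 3 * f (1, 1, 1) := by
  simp only [bernTripleMean, binaryCube, bernTripleMass, bernMass, mul_ite, ite_mul, sum_product,
    mem_singleton, zero_ne_one, not_false_eq_true, sum_insert, ↓reduceIte, sum_singleton]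
  ring

lemma measureReal_preimage_eq_bernTripleMass {Ω : Type*} [MeasurableSpace Ω] {μ : Measure Ω}
    {X₁ X₂ X₃ : Ω → ℝ} {q : ℝ} (hq0 : 0 ≤ q) (hq1 : q ≤ 1)
    (hjoint : ∀ a b c : ℝ, (a = 0 ∨ a = 1) → (b = 0 ∨ b = 1) → (c = 0 ∨ c = 1) →
      μ {ω | X₁ ω = a ∧ X₂ ω = b ∧ X₃ ω = c} =
        ENNReal.ofReal (bernMass q a * bernMass q b * bernMass q c)) :
    ∀ v ∈ binaryCube,
      μ.real ((fun ω ↦ (X₁ ω, X₂ ω, X₃ ω)) ⁻¹' {v}) = bernTripleMass q v := by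
  rintro ⟨a, b, c⟩ hv
  obtain ⟨ha, hb, hc⟩ := mem_binaryCube.1 hv
  have hpre : (fun ω ↦ (X₁ ω, X₂ ω, X₃ ω)) ⁻¹' {(a, b, c)} =
      {ω | X₁ ω = a ∧ X₂ ω = b ∧ X₃ ω = c} := by
    ext ω
    simp
  rw [measureReal_def, hpre, hjoint a b c ha hb hc]
  exact ENNReal.toReal_ofReal (bernTripleMass_nonneg hq0 hq1 (a, b, c))

section BernoulliTriple

variable {Ω : Type*} [MeasurableSpace Ω] {μ : Measure Ω} [IsProbabilityMeasure μ]
  {X : Ω → ℝ × ℝ × ℝ} {q : ℝ}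

lemma integral_comp_eq_bernTripleMean (hX : Measurable X) (h01 : ∀ ω, X ω ∈ binaryCube)
    (hlaw : ∀ v ∈ binaryCube, μ.real (X ⁻¹' {v}) = bernTripleMass q v) (f : ℝ × ℝ × ℝ → ℝ) :
    ∫ ω, f (X ω) ∂μ = bernTripleMean q f := by
  rw [integral_comp_eq_sum_of_mem hX h01]
  exact Finset.sum_congr rfl fun v hv ↦ by rw [hlaw v hv]

lemma covariance_comp_eq_bernTripleCov (hX : Measurable X) (h01 : ∀ ω, X ω ∈ binaryCube)
    (hlaw : ∀ v ∈ binaryCube, μ.real (X ⁻¹' {v}) = bernTripleMass q v) (f g : ℝ × ℝ × ℝ → ℝ) :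
    cov[fun ω ↦ f (X ω), fun ω ↦ g (X ω); μ] = bernTripleCov q f g := by
  rw [covariance_eq_sub (memLp_comp_of_mem hX h01 f 2) (memLp_comp_of_mem hX h01 g 2),
    bernTripleCov, ← integral_comp_eq_bernTripleMean hX h01 hlaw,
    ← integral_comp_eq_bernTripleMean hX h01 hlaw, ← integral_comp_eq_bernTripleMean hX h01 hlaw]
  rfl

lemma covariance_sum_eq_sum_bernTripleCov {ι : Type*} [Fintype ι] {V : ι → Ω → ℝ × ℝ × ℝ}
    (hV : iIndepFun V μ) (hmeas : ∀ i, Measurable (V i)) (h01 : ∀ i ω, V i ω ∈ binaryCube)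
    {q : ι → ℝ} (hlaw : ∀ i, ∀ v ∈ binaryCube, μ.real (V i ⁻¹' {v}) = bernTripleMass (q i) v)
    {f g : ℝ × ℝ × ℝ → ℝ} (hf : Measurable f) (hg : Measurable g) :
    cov[fun ω ↦ ∑ i, f (V i ω), fun ω ↦ ∑ i, g (V i ω); μ] = ∑ i, bernTripleCov (q i) f g := by
  rw [covariance_sum_comp_of_iIndepFun hV hf hg (fun i ↦ memLp_comp_of_mem (hmeas i) (h01 i) f 2)
    (fun i ↦ memLp_comp_of_mem (hmeas i) (h01 i) g 2)]
  exact Finset.sum_congr rfl fun i _ ↦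
    covariance_comp_eq_bernTripleCov (hmeas i) (h01 i) (hlaw i) f g

end BernoulliTriple

def replicateAbsDiff (v : ℝ × ℝ × ℝ) : ℝ := |v.2.1 - v.1|

-- On `{0,1}³` this is the indicator that exactly one of the three replicates equals `1`.
noncomputable def secondDiffIndicator (v : ℝ × ℝ × ℝ) : ℝ :=
  if v.2.2 - 2 * v.2.1 + v.1 = 1 ∨ v.2.2 - 2 * v.2.1 + v.1 = -2 then 1 else 0

lemma bernTripleCov_secondDiffIndicator_self (q : ℝ) :
    bernTripleCov q secondDiffIndicator secondDiffIndicator =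
      3 * q * (1 - q) ^ 2 - (3 * q * (1 - q) ^ 2) ^ 2 := by
  simp only [bernTripleCov, bernTripleMean_eq]
  norm_num [secondDiffIndicator]
  ring

lemma bernTripleCov_fst_secondDiffIndicator (q : ℝ) :
    bernTripleCov q Prod.fst secondDiffIndicator =
      q * (1 - q) ^ 2 - q * (3 * q * (1 - q) ^ 2) := by
  simp only [bernTripleCov, bernTripleMean_eq]
  norm_num [secondDiffIndicator]
  ring

lemma bernTripleCov_replicateAbsDiff_secondDiffIndicator (q : ℝ) :
    bernTripleCov q replicateAbsDiff secondDiffIndicator =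
      2 * q * (1 - q) ^ 2 - 2 * q * (1 - q) * (3 * q * (1 - q) ^ 2) := by
  simp only [bernTripleCov, bernTripleMean_eq]
  norm_num [replicateAbsDiff, secondDiffIndicator]
  ring

lemma measurable_replicateAbsDiff : Measurable replicateAbsDiff := by
  unfold replicateAbsDiff
  fun_prop

lemma measurable_secondDiffIndicator : Measurable secondDiffIndicator := by
  have hL : Measurable fun v : ℝ × ℝ × ℝ ↦ v.2.2 - 2 * v.2.1 + v.1 := by fun_prop
  exact Measurable.ite ((measurableSet_eq_fun hL measurable_const).union
    (measurableSet_eq_fun hL measurable_const)) measurable_const measurable_const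

theorem second_moment_identities_u3_general
    {Ω : Type*} [MeasurableSpace Ω] (μ : Measure Ω) [IsProbabilityMeasure μ]
    (p : ℕ) (hp : 2 ≤ p)
    (A : Fin p → Fin p → ℝ)
    (hA01 : ∀ i j, A i j = 0 ∨ A i j = 1)
    (α β : ℝ) (hα0 : 0 ≤ α) (hα1 : α ≤ 1) (hβ0 : 0 ≤ β) (hβ1 : β ≤ 1)
    (Y Ystar Ystarstar : Fin p → Fin p → Ω → ℝ)
    (hYmeas : ∀ i j, Measurable (Y i j)) (hYstarmeas : ∀ i j, Measurable (Ystar i j))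
    (hYssmeas : ∀ i j, Measurable (Ystarstar i j))
    (hY01 : ∀ i j ω, Y i j ω = 0 ∨ Y i j ω = 1)
    (hYstar01 : ∀ i j ω, Ystar i j ω = 0 ∨ Ystar i j ω = 1)
    (hYss01 : ∀ i j ω, Ystarstar i j ω = 0 ∨ Ystarstar i j ω = 1)
    -- within each pair `i < j`, the three replicates are i.i.d. Bernoulli with
    -- success probability `1−β` if `Aᵢⱼ = 1` and `α` if `Aᵢⱼ = 0`
    (hjoint : ∀ i j, i < j → ∀ a b c : ℝ,
      (a = 0 ∨ a = 1) → (b = 0 ∨ b = 1) → (c = 0 ∨ c = 1) →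
      μ {ω | Y i j ω = a ∧ Ystar i j ω = b ∧ Ystarstar i j ω = c} =
        ENNReal.ofReal (bernMass (if A i j = 1 then 1 - β else α) a *
          bernMass (if A i j = 1 then 1 - β else α) b *
          bernMass (if A i j = 1 then 1 - β else α) c))
    -- the triples `(Yᵢⱼ, Y*ᵢⱼ, Y**ᵢⱼ)` are independent across unordered vertex pairs
    (hindep : iIndepFun (m := fun _ : EdgeIdx p => (inferInstance : MeasurableSpace (ℝ × ℝ × ℝ)))
      (fun e ω => (Y e.1.1 e.1.2 ω, Ystar e.1.1 e.1.2 ω, Ystarstar e.1.1 e.1.2 ω)) μ)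
    (N δ κ₁ κ₂ : ℝ)
    (hN : N = (p : ℝ) * ((p : ℝ) - 1) / 2)
    (hδ : δ = N⁻¹ * ∑ q ∈ univ.filter (fun q : Fin p × Fin p => q.1 < q.2), A q.1 q.2)
    (hκ₁ : κ₁ = α * (1 - α)) (hκ₂ : κ₂ = β * (1 - β))
    (uhat₁ uhat₂ uhat₃ : Ω → ℝ)
    (huhat₁ : ∀ ω, uhat₁ ω = N⁻¹ * ∑ q ∈ univ.filter (fun q : Fin p × Fin p => q.1 < q.2),
      Y q.1 q.2 ω)
    (huhat₂ : ∀ ω, uhat₂ ω = (2 * N)⁻¹ *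
      ∑ q ∈ univ.filter (fun q : Fin p × Fin p => q.1 < q.2),
        |Ystar q.1 q.2 ω - Y q.1 q.2 ω|)
    (huhat₃ : ∀ ω, uhat₃ ω = (3 * N)⁻¹ *
      ∑ q ∈ univ.filter (fun q : Fin p × Fin p => q.1 < q.2),
        (if Ystarstar q.1 q.2 ω - 2 * Ystar q.1 q.2 ω + Y q.1 q.2 ω = 1 ∨
            Ystarstar q.1 q.2 ω - 2 * Ystar q.1 q.2 ω + Y q.1 q.2 ω = -2
          then (1 : ℝ) else 0))
    (u₁ u₂ u₃ : ℝ)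
    (hu₁ : u₁ = ∫ ω, uhat₁ ω ∂μ) (hu₂ : u₂ = ∫ ω, uhat₂ ω ∂μ)
    (hu₃ : u₃ = ∫ ω, uhat₃ ω ∂μ) :
    N * ∫ ω, (uhat₃ ω - u₃) ^ 2 ∂μ
        = δ * β * κ₂ * (1 / 3 - β * κ₂) + (1 - δ) * κ₁ * (1 - α) * (1 / 3 - κ₁ * (1 - α)) ∧
    N * ∫ ω, (uhat₁ ω - u₁) * (uhat₃ ω - u₃) ∂μ
        = δ * κ₂ * (β ^ 2 / 3 - 2 * κ₂ / 3) + (1 - δ) * κ₁ * ((1 - α) ^ 2 / 3 - 2 * κ₁ / 3) ∧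
    N * ∫ ω, (uhat₂ ω - u₂) * (uhat₃ ω - u₃) ∂μ
        = δ * β * κ₂ * (1 / 3 - κ₂) + (1 - δ) * (1 - α) * κ₁ * (1 / 3 - κ₁) := by
  set V : EdgeIdx p → Ω → ℝ × ℝ × ℝ :=
    fun e ω ↦ (Y e.1.1 e.1.2 ω, Ystar e.1.1 e.1.2 ω, Ystarstar e.1.1 e.1.2 ω)
  have hsum (F : Fin p × Fin p → ℝ) :
      ∑ q ∈ univ.filter (fun q : Fin p × Fin p => q.1 < q.2), F q = ∑ e : EdgeIdx p, F e.1 :=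
    Finset.sum_subtype _ (by simp) F
  have hcov {f g : ℝ × ℝ × ℝ → ℝ} (hf : Measurable f) (hg : Measurable g) :
      cov[fun ω ↦ ∑ e, f (V e ω), fun ω ↦ ∑ e, g (V e ω); μ] =
        δ * N * bernTripleCov (1 - β) f g + (1 - δ) * N * bernTripleCov α f g := by
    have hq (e : EdgeIdx p) : 0 ≤ (if A e.1.1 e.1.2 = 1 then 1 - β else α) ∧
        (if A e.1.1 e.1.2 = 1 then 1 - β else α) ≤ 1 := by
      split_ifs <;> constructor <;> linarith
    rw [covariance_sum_eq_sum_bernTripleCov hindep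
      (fun e ↦ (hYmeas _ _).prodMk ((hYstarmeas _ _).prodMk (hYssmeas _ _)))
      (fun e ω ↦ mem_binaryCube.2 ⟨hY01 _ _ ω, hYstar01 _ _ ω, hYss01 _ _ ω⟩)
      (fun e ↦ measureReal_preimage_eq_bernTripleMass (hq e).1 (hq e).2 (hjoint _ _ e.2)) hf hg]
    exact sum_edgeIdx_apply_ite hp hA01 hN hδ (fun q ↦ bernTripleCov q f g) _ _
  have h₁ : uhat₁ = fun ω ↦ N⁻¹ * ∑ e, Prod.fst (V e ω) :=
    funext fun ω ↦ by rw [huhat₁, hsum]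
  have h₂ : uhat₂ = fun ω ↦ (2 * N)⁻¹ * ∑ e, replicateAbsDiff (V e ω) :=
    funext fun ω ↦ by rw [huhat₂, hsum]; rfl
  have h₃ : uhat₃ = fun ω ↦ (3 * N)⁻¹ * ∑ e, secondDiffIndicator (V e ω) :=
    funext fun ω ↦ by rw [huhat₃, hsum]; rfl
  have hN0 : N ≠ 0 := hN ▸ choose_two_cast_ne_zero hp
  subst hu₁ hu₂ hu₃
  simp only [sq]
  change N * cov[uhat₃, uhat₃; μ] = _ ∧ N * cov[uhat₁, uhat₃; μ] = _ ∧
    N * cov[uhat₂, uhat₃; μ] = _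
  simp only [h₁, h₂, h₃, covariance_const_mul_left, covariance_const_mul_right,
    hcov measurable_secondDiffIndicator measurable_secondDiffIndicator,
    hcov measurable_fst measurable_secondDiffIndicator,
    hcov measurable_replicateAbsDiff measurable_secondDiffIndicator,
    bernTripleCov_secondDiffIndicator_self, bernTripleCov_fst_secondDiffIndicator,
    bernTripleCov_replicateAbsDiff_secondDiffIndicator, hκ₁, hκ₂]
  refine ⟨?_, ?_, ?_⟩ <;> field_simp <;> ring

/-- Exact second-moment identities (Lemma 1, entries involving `û₃`): under the noisy
network model with three independent replicates, with `û₁ = N⁻¹ ∑_{i<j} Yᵢⱼ`,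
`û₂ = (2N)⁻¹ ∑_{i<j} |Y*ᵢⱼ − Yᵢⱼ|`,
`û₃ = (3N)⁻¹ ∑_{i<j} I(Y**ᵢⱼ − 2Y*ᵢⱼ + Yᵢⱼ ∈ {1,−2})`, `u_k = E(û_k)`,
`κ₁ = α(1−α)`, `κ₂ = β(1−β)`, one has
`N·E{(û₃−u₃)²} = δβκ₂(1/3−βκ₂) + (1−δ)κ₁(1−α){1/3−κ₁(1−α)}`,
`N·E{(û₁−u₁)(û₃−u₃)} = δκ₂(β²/3−2κ₂/3) + (1−δ)κ₁{(1−α)²/3−2κ₁/3}`, and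
`N·E{(û₂−u₂)(û₃−u₃)} = δβκ₂(1/3−κ₂) + (1−δ)(1−α)κ₁(1/3−κ₁)`. -/
theorem second_moment_identities_u3
    {Ω : Type*} [MeasurableSpace Ω] (μ : Measure Ω) [IsProbabilityMeasure μ]
    (p : ℕ) (hp : 2 ≤ p)
    (A : Fin p → Fin p → ℝ)
    (hA01 : ∀ i j, A i j = 0 ∨ A i j = 1)
    (hAsym : ∀ i j, A i j = A j i) (hAdiag : ∀ i, A i i = 0)
    (α β : ℝ) (hα0 : 0 ≤ α) (hα1 : α ≤ 1) (hβ0 : 0 ≤ β) (hβ1 : β ≤ 1)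
    (hαβ : α + β ≤ 1)
    (Y Ystar Ystarstar : Fin p → Fin p → Ω → ℝ)
    (hYmeas : ∀ i j, Measurable (Y i j)) (hYstarmeas : ∀ i j, Measurable (Ystar i j))
    (hYssmeas : ∀ i j, Measurable (Ystarstar i j))
    (hY01 : ∀ i j ω, Y i j ω = 0 ∨ Y i j ω = 1)
    (hYstar01 : ∀ i j ω, Ystar i j ω = 0 ∨ Ystar i j ω = 1)
    (hYss01 : ∀ i j ω, Ystarstar i j ω = 0 ∨ Ystarstar i j ω = 1)
    -- within each pair `i < j`, the three replicates are i.i.d. Bernoulli with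
    -- success probability `1−β` if `Aᵢⱼ = 1` and `α` if `Aᵢⱼ = 0`
    (hjoint : ∀ i j, i < j → ∀ a b c : ℝ,
      (a = 0 ∨ a = 1) → (b = 0 ∨ b = 1) → (c = 0 ∨ c = 1) →
      μ {ω | Y i j ω = a ∧ Ystar i j ω = b ∧ Ystarstar i j ω = c} =
        ENNReal.ofReal (bernMass (if A i j = 1 then 1 - β else α) a *
          bernMass (if A i j = 1 then 1 - β else α) b *
          bernMass (if A i j = 1 then 1 - β else α) c))
    -- the triples `(Yᵢⱼ, Y*ᵢⱼ, Y**ᵢⱼ)` are independent across unordered vertex pairs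
    (hindep : iIndepFun (m := fun _ : EdgeIdx p => (inferInstance : MeasurableSpace (ℝ × ℝ × ℝ)))
      (fun e ω => (Y e.1.1 e.1.2 ω, Ystar e.1.1 e.1.2 ω, Ystarstar e.1.1 e.1.2 ω)) μ)
    (N δ κ₁ κ₂ : ℝ)
    (hN : N = (p : ℝ) * ((p : ℝ) - 1) / 2)
    (hδ : δ = N⁻¹ * ∑ q ∈ univ.filter (fun q : Fin p × Fin p => q.1 < q.2), A q.1 q.2)
    (hκ₁ : κ₁ = α * (1 - α)) (hκ₂ : κ₂ = β * (1 - β))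
    (uhat₁ uhat₂ uhat₃ : Ω → ℝ)
    (huhat₁ : ∀ ω, uhat₁ ω = N⁻¹ * ∑ q ∈ univ.filter (fun q : Fin p × Fin p => q.1 < q.2),
      Y q.1 q.2 ω)
    (huhat₂ : ∀ ω, uhat₂ ω = (2 * N)⁻¹ *
      ∑ q ∈ univ.filter (fun q : Fin p × Fin p => q.1 < q.2),
        |Ystar q.1 q.2 ω - Y q.1 q.2 ω|)
    (huhat₃ : ∀ ω, uhat₃ ω = (3 * N)⁻¹ *
      ∑ q ∈ univ.filter (fun q : Fin p × Fin p => q.1 < q.2),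
        (if Ystarstar q.1 q.2 ω - 2 * Ystar q.1 q.2 ω + Y q.1 q.2 ω = 1 ∨
            Ystarstar q.1 q.2 ω - 2 * Ystar q.1 q.2 ω + Y q.1 q.2 ω = -2
          then (1 : ℝ) else 0))
    (u₁ u₂ u₃ : ℝ)
    (hu₁ : u₁ = ∫ ω, uhat₁ ω ∂μ) (hu₂ : u₂ = ∫ ω, uhat₂ ω ∂μ)
    (hu₃ : u₃ = ∫ ω, uhat₃ ω ∂μ) :
    N * ∫ ω, (uhat₃ ω - u₃) ^ 2 ∂μ
        = δ * β * κ₂ * (1 / 3 - β * κ₂) + (1 - δ) * κ₁ * (1 - α) * (1 / 3 - κ₁ * (1 - α)) ∧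
    N * ∫ ω, (uhat₁ ω - u₁) * (uhat₃ ω - u₃) ∂μ
        = δ * κ₂ * (β ^ 2 / 3 - 2 * κ₂ / 3) + (1 - δ) * κ₁ * ((1 - α) ^ 2 / 3 - 2 * κ₁ / 3) ∧
    N * ∫ ω, (uhat₂ ω - u₂) * (uhat₃ ω - u₃) ∂μ
        = δ * β * κ₂ * (1 / 3 - κ₂) + (1 - δ) * (1 - α) * κ₁ * (1 / 3 - κ₁) :=
  second_moment_identities_u3_general μ p hp A hA01 α β hα0 hα1 hβ0 hβ1 Y Ystar Ystarstar hYmeas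
    hYstarmeas hYssmeas hY01 hYstar01 hYss01 hjoint hindep N δ κ₁ κ₂ hN hδ hκ₁ hκ₂ uhat₁ uhat₂ uhat₃
    huhat₁ huhat₂ huhat₃ u₁ u₂ u₃ hu₁ hu₂ hu₃
end

section
/- (Unbiasedness of the subgraph-density moment estimator with known error rates.) Under the noisy network model, let 𝒱 be a subgraph index set with parameters k and τ₁,…,τ_k ∈ {0,1}, and define the estimator T̃_𝒱 = |𝒱|^{-1} Σ_{v=(i₁,i₁′,…,i_k,i_k′)∈𝒱} Π_{ℓ=1}^k φ_ℓ(Y_{i_ℓ,i_ℓ′}) with φ_ℓ(x) = (x−α)^{τ_ℓ}(1−β−x)^{1−τ_ℓ}, and the subgraph density C_𝒱 = |𝒱|^{-1} Σ_{v∈𝒱} Π_{ℓ=1}^k A_{i_ℓ,i_ℓ′}^{τ_ℓ}(1−A_{i_ℓ,i_ℓ′})^{1−τ_ℓ}. Then E(T̃_𝒱) = (1−α−β)^k · C_𝒱. -/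
open MeasureTheory ProbabilityTheory Finset

/-! Each summand of the estimator is a product, over the `k` distinct edges of the tuple, of
independent factors `φ_ℓ(Y)`. Since `Y` is `{0,1}`-valued and `τ_ℓ ∈ {0,1}`, each `φ_ℓ` is affine on
the values of `Y`, so `E φ_ℓ(Y) = φ_ℓ(E Y)`, and plugging in `E Y = 1 - β` or `α` gives
`(1 - α - β) A^τ (1 - A)^{1-τ}`. -/

/-- The paper's `φ_ℓ`, for `τ_ℓ = t`. -/
def momentFactor (α β : ℝ) (t : ℕ) (x : ℝ) : ℝ := (x - α) ^ t * (1 - β - x) ^ (1 - t)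

@[fun_prop]
lemma measurable_momentFactor (α β : ℝ) (t : ℕ) : Measurable (momentFactor α β t) := by
  unfold momentFactor; fun_prop

lemma momentFactor_edgeProb (α β : ℝ) {a : ℝ} (ha : a = 0 ∨ a = 1) {t : ℕ} (ht : t = 0 ∨ t = 1) :
    momentFactor α β t (if a = 1 then 1 - β else α) = (1 - α - β) * (a ^ t * (1 - a) ^ (1 - t)) := by
  rcases ha with rfl | rfl <;> rcases ht with rfl | rfl <;> norm_num [momentFactor] <;> ring

lemma abs_apply_le_max_of_zero_or_one (g : ℝ → ℝ) {x : ℝ} (hx : x = 0 ∨ x = 1) :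
    |g x| ≤ max |g 0| |g 1| := by
  rcases hx with rfl | rfl <;> simp

section ZeroOne

variable {Ω : Type*} [MeasurableSpace Ω] {μ : Measure Ω} {X : Ω → ℝ}

lemma integral_eq_measureReal_of_zero_or_one [IsFiniteMeasure μ] (hm : Measurable X)
    (hX : ∀ ω, X ω = 0 ∨ X ω = 1) : ∫ ω, X ω ∂μ = μ.real {ω | X ω = 1} := by
  have hind : ∀ ω, X ω = Set.indicator {ω | X ω = 1} 1 ω := fun ω => by
    rcases hX ω with h | h <;> simp [h]
  have hs : MeasurableSet {ω | X ω = 1} := hm (measurableSet_singleton 1)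
  rw [integral_congr_ae (.of_forall hind), integral_indicator_one hs]

lemma integral_momentFactor [IsProbabilityMeasure μ] (hm : Measurable X)
    (hX : ∀ ω, X ω = 0 ∨ X ω = 1) (α β : ℝ) {t : ℕ} (ht : t = 0 ∨ t = 1) :
    ∫ ω, momentFactor α β t (X ω) ∂μ = momentFactor α β t (μ.real {ω | X ω = 1}) := by
  have hint : Integrable X μ :=
    .of_bound hm.aestronglyMeasurable 1 (.of_forall fun ω => by rcases hX ω with h | h <;> simp [h])
  rw [← integral_eq_measureReal_of_zero_or_one hm hX]
  rcases ht with rfl | rfl <;> simp only [momentFactor, pow_zero, pow_one, one_mul, mul_one,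
    Nat.sub_zero, Nat.sub_self]
  · rw [integral_sub (integrable_const _) hint, integral_const, probReal_univ, one_smul]
  · rw [integral_sub hint (integrable_const _), integral_const, probReal_univ, one_smul]

variable {ι : Type*} [Fintype ι] {Z : ι → Ω → ℝ}

lemma integrable_prod_comp_of_zero_or_one [IsFiniteMeasure μ] (hm : ∀ i, Measurable (Z i))
    (hZ : ∀ i ω, Z i ω = 0 ∨ Z i ω = 1) {g : ι → ℝ → ℝ} (hg : ∀ i, Measurable (g i)) :
    Integrable (fun ω => ∏ i, g i (Z i ω)) μ := by
  refine .of_bound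
    (Finset.measurable_prod _ fun i _ => (hg i).comp (hm i)).aestronglyMeasurable (∏ i, max |g i 0| |g i 1|) (.of_forall fun ω => ?_)
  rw [Real.norm_eq_abs, Finset.abs_prod]
  exact Finset.prod_le_prod (fun i _ => abs_nonneg _)
    fun i _ => abs_apply_le_max_of_zero_or_one (g i) (hZ i ω)

lemma integral_prod_momentFactor_of_iIndepFun (hindep : iIndepFun Z μ)
    (hm : ∀ i, Measurable (Z i)) (hZ : ∀ i ω, Z i ω = 0 ∨ Z i ω = 1) (α β : ℝ) {t : ι → ℕ}
    (ht : ∀ i, t i = 0 ∨ t i = 1) :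
    ∫ ω, ∏ i, momentFactor α β (t i) (Z i ω) ∂μ
      = ∏ i, momentFactor α β (t i) (μ.real {ω | Z i ω = 1}) := by
  have := hindep.isProbabilityMeasure
  rw [hindep.integral_fun_prod_comp (fun i => (hm i).aemeasurable)
    (fun i => (measurable_momentFactor α β (t i)).aestronglyMeasurable)]
  exact Finset.prod_congr rfl fun i _ => integral_momentFactor (hm i) (hZ i) α β (ht i)

end ZeroOne

lemma EdgeIdx.exists_eq_or_eq_swap {p : ℕ} {i j : Fin p} (h : i ≠ j) :
    ∃ e : EdgeIdx p, e.1 = (i, j) ∨ e.1 = (j, i) := by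
  rcases h.lt_or_gt with h | h
  · exact ⟨⟨(i, j), h⟩, .inl rfl⟩
  · exact ⟨⟨(j, i), h⟩, .inr rfl⟩

/-- Orienting each pair as `i < j` sends the pairs `w ℓ` injectively into `EdgeIdx p`. -/
lemma iIndepFun_edges {Ω : Type*} [MeasurableSpace Ω] {μ : Measure Ω} {p : ℕ}
    {Y : Fin p → Fin p → Ω → ℝ} (hYsym : ∀ i j ω, Y i j ω = Y j i ω)
    (hindep : iIndepFun (fun e : EdgeIdx p => Y e.1.1 e.1.2) μ)
    {ι : Type*} {w : ι → Fin p × Fin p} (hne : ∀ ℓ, (w ℓ).1 ≠ (w ℓ).2)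
    (hdisj : ∀ ℓ₁ ℓ₂, ℓ₁ ≠ ℓ₂ →
      (({(w ℓ₁).1, (w ℓ₁).2} ∩ {(w ℓ₂).1, (w ℓ₂).2} : Finset (Fin p)).card ≤ 1)) :
    iIndepFun (fun ℓ => Y (w ℓ).1 (w ℓ).2) μ := by
  choose e he using fun ℓ => EdgeIdx.exists_eq_or_eq_swap (hne ℓ)
  have hpair : ∀ ℓ, ({(w ℓ).1, (w ℓ).2} : Finset (Fin p)) = {(e ℓ).1.1, (e ℓ).1.2} := fun ℓ => by
    rcases he ℓ with h | h <;> simp [h, Finset.pair_comm]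
  have hY : ∀ ℓ, Y (e ℓ).1.1 (e ℓ).1.2 = Y (w ℓ).1 (w ℓ).2 := fun ℓ => by
    funext ω; rcases he ℓ with h | h <;> simp [h, hYsym]
  have hinj : Function.Injective e := by
    intro ℓ₁ ℓ₂ h
    by_contra h12
    have := hdisj ℓ₁ ℓ₂ h12
    rw [hpair, hpair, h, Finset.inter_self, ← hpair, Finset.card_pair (hne ℓ₂)] at this
    omega
  simpa only [hY] using hindep.precomp hinj

theorem expectation_subgraph_moment_estimator_general
    {Ω : Type*} [MeasurableSpace Ω] (μ : Measure Ω) [IsProbabilityMeasure μ]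
    (p : ℕ)
    (A : Fin p → Fin p → ℝ)
    (hA01 : ∀ i j, A i j = 0 ∨ A i j = 1)
    (α β : ℝ) (hα0 : 0 ≤ α) (hβ1 : β ≤ 1)
    (Y : Fin p → Fin p → Ω → ℝ)
    (hYmeas : ∀ i j, Measurable (Y i j))
    (hY01 : ∀ i j ω, Y i j ω = 0 ∨ Y i j ω = 1)
    (hYsym : ∀ i j ω, Y i j ω = Y j i ω)
    (hYdist : ∀ i j : Fin p, i ≠ j →
      μ {ω | Y i j ω = 1} = ENNReal.ofReal (if A i j = 1 then 1 - β else α))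
    -- the observed edge indicators are independent across unordered vertex pairs
    (hindep : iIndepFun (m := fun _ : EdgeIdx p => (inferInstance : MeasurableSpace ℝ))
      (fun e ω => Y e.1.1 e.1.2 ω) μ)
    (k : ℕ)
    (V : Finset (Fin k → Fin p × Fin p))
    (hV : ∀ v ∈ V, (∀ ℓ, (v ℓ).1 ≠ (v ℓ).2) ∧
      ∀ ℓ₁ ℓ₂, ℓ₁ ≠ ℓ₂ →
        (({(v ℓ₁).1, (v ℓ₁).2} ∩ {(v ℓ₂).1, (v ℓ₂).2} : Finset (Fin p)).card ≤ 1))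
    (τ : Fin k → ℕ) (hτ : ∀ ℓ, τ ℓ = 0 ∨ τ ℓ = 1) :
    ∫ ω, (V.card : ℝ)⁻¹ * ∑ v ∈ V, ∏ ℓ,
        (Y (v ℓ).1 (v ℓ).2 ω - α) ^ τ ℓ * (1 - β - Y (v ℓ).1 (v ℓ).2 ω) ^ (1 - τ ℓ) ∂μ
      = (1 - α - β) ^ k *
        ((V.card : ℝ)⁻¹ * ∑ v ∈ V, ∏ ℓ,
          (A (v ℓ).1 (v ℓ).2) ^ τ ℓ * (1 - A (v ℓ).1 (v ℓ).2) ^ (1 - τ ℓ)) := by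
  have htuple : ∀ v ∈ V, ∫ ω, ∏ ℓ, momentFactor α β (τ ℓ) (Y (v ℓ).1 (v ℓ).2 ω) ∂μ
      = (1 - α - β) ^ k * ∏ ℓ, A (v ℓ).1 (v ℓ).2 ^ τ ℓ * (1 - A (v ℓ).1 (v ℓ).2) ^ (1 - τ ℓ) := by
    intro v hv
    obtain ⟨hne, hdisj⟩ := hV v hv
    have hprob (ℓ : Fin k) : μ.real {ω | Y (v ℓ).1 (v ℓ).2 ω = 1}
        = if A (v ℓ).1 (v ℓ).2 = 1 then 1 - β else α := by
      rw [measureReal_def, hYdist _ _ (hne ℓ), ENNReal.toReal_ofReal (by split_ifs <;> linarith)]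
    rw [integral_prod_momentFactor_of_iIndepFun (iIndepFun_edges hYsym hindep hne hdisj)
      (fun ℓ => hYmeas _ _) (fun ℓ => hY01 _ _) α β hτ, ← Fin.prod_const k (1 - α - β),
      ← prod_mul_distrib]
    exact prod_congr rfl fun ℓ _ => by rw [hprob, momentFactor_edgeProb α β (hA01 _ _) (hτ ℓ)]
  have hint (v) (_ : v ∈ V) :
      Integrable (fun ω => ∏ ℓ, momentFactor α β (τ ℓ) (Y (v ℓ).1 (v ℓ).2 ω)) μ :=
    integrable_prod_comp_of_zero_or_one (fun ℓ => hYmeas _ _) (fun ℓ => hY01 _ _)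
      fun ℓ => measurable_momentFactor α β (τ ℓ)
  change ∫ ω, _ * ∑ v ∈ V, ∏ ℓ, momentFactor α β (τ ℓ) (Y (v ℓ).1 (v ℓ).2 ω) ∂μ = _
  rw [integral_const_mul, integral_finsetSum V hint, sum_congr rfl htuple, ← mul_sum]
  ring

/-- Unbiasedness of the subgraph-density moment estimator with known error rates:
with `T̃_𝒱 = |𝒱|⁻¹ ∑_{v∈𝒱} ∏_ℓ φ_ℓ(Y_{i_ℓ,i_ℓ'})`, where
`φ_ℓ(x) = (x−α)^{τ_ℓ}(1−β−x)^{1−τ_ℓ}` (convention `0⁰ = 1`), and the subgraph density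
`C_𝒱 = |𝒱|⁻¹ ∑_{v∈𝒱} ∏_ℓ A_{i_ℓ,i_ℓ'}^{τ_ℓ}(1−A_{i_ℓ,i_ℓ'})^{1−τ_ℓ}`,
one has `E(T̃_𝒱) = (1−α−β)^k · C_𝒱`. -/
theorem expectation_subgraph_moment_estimator
    {Ω : Type*} [MeasurableSpace Ω] (μ : Measure Ω) [IsProbabilityMeasure μ]
    (p : ℕ) (hp : 2 ≤ p)
    (A : Fin p → Fin p → ℝ)
    (hA01 : ∀ i j, A i j = 0 ∨ A i j = 1)
    (hAsym : ∀ i j, A i j = A j i) (hAdiag : ∀ i, A i i = 0)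
    (α β : ℝ) (hα0 : 0 ≤ α) (hα1 : α ≤ 1) (hβ0 : 0 ≤ β) (hβ1 : β ≤ 1)
    (hαβ : α + β ≤ 1)
    (Y : Fin p → Fin p → Ω → ℝ)
    (hYmeas : ∀ i j, Measurable (Y i j))
    (hY01 : ∀ i j ω, Y i j ω = 0 ∨ Y i j ω = 1)
    (hYsym : ∀ i j ω, Y i j ω = Y j i ω)
    (hYdist : ∀ i j : Fin p, i ≠ j →
      μ {ω | Y i j ω = 1} = ENNReal.ofReal (if A i j = 1 then 1 - β else α))
    -- the observed edge indicators are independent across unordered vertex pairs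
    (hindep : iIndepFun (m := fun _ : EdgeIdx p => (inferInstance : MeasurableSpace ℝ))
      (fun e ω => Y e.1.1 e.1.2 ω) μ)
    (k : ℕ) (hk : 1 ≤ k)
    (V : Finset (Fin k → Fin p × Fin p)) (hVne : V.Nonempty)
    (hV : ∀ v ∈ V, (∀ ℓ, (v ℓ).1 ≠ (v ℓ).2) ∧
      ∀ ℓ₁ ℓ₂, ℓ₁ ≠ ℓ₂ →
        (({(v ℓ₁).1, (v ℓ₁).2} ∩ {(v ℓ₂).1, (v ℓ₂).2} : Finset (Fin p)).card ≤ 1))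
    (τ : Fin k → ℕ) (hτ : ∀ ℓ, τ ℓ = 0 ∨ τ ℓ = 1) :
    ∫ ω, (V.card : ℝ)⁻¹ * ∑ v ∈ V, ∏ ℓ,
        (Y (v ℓ).1 (v ℓ).2 ω - α) ^ τ ℓ * (1 - β - Y (v ℓ).1 (v ℓ).2 ω) ^ (1 - τ ℓ) ∂μ
      = (1 - α - β) ^ k *
        ((V.card : ℝ)⁻¹ * ∑ v ∈ V, ∏ ℓ,
          (A (v ℓ).1 (v ℓ).2) ^ τ ℓ * (1 - A (v ℓ).1 (v ℓ).2) ^ (1 - τ ℓ)) :=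
  expectation_subgraph_moment_estimator_general μ p A hA01 α β hα0 hβ1 Y hYmeas hY01 hYsym hYdist
    hindep k V hV τ hτ
end

section
/- (Quantitative second-moment bound underlying Proposition 2.) Under the noisy network model, let 𝒱 be a subgraph index set with parameters k ≥ 2 and τ₁,…,τ_k ∈ {0,1}, let T̃_𝒱 = |𝒱|^{-1} Σ_{v∈𝒱} Π_{ℓ=1}^k φ_ℓ(Y_{i_ℓ,i_ℓ′}) and T_𝒱 = |𝒱|^{-1} Σ_{v∈𝒱} Π_{ℓ=1}^k E{φ_ℓ(Y_{i_ℓ,i_ℓ′})}, where φ_ℓ(x) = (x−α)^{τ_ℓ}(1−β−x)^{1−τ_ℓ}. Then E{|T̃_𝒱 − T_𝒱|²} ≤ 2^k · k! · q_max^{2k} · (2^k − 1)² · ℵ_𝒱 / |𝒱|, where q_max = max{α, 1−α, β, 1−β} and ℵ_𝒱 is defined below. -/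
open MeasureTheory ProbabilityTheory Finset

/-- The number of tuples in `𝒢_S(v)`: replacements of the coordinates of `v` in
positions `S` that keep the tuple inside `V`; equivalently, the number of tuples of
`V` that agree with `v` outside `S`. -/
def replCard {p k : ℕ} (V : Finset (Fin k → Fin p × Fin p))
    (v : Fin k → Fin p × Fin p) (S : Finset (Fin k)) : ℕ :=
  (V.filter (fun v' => ∀ ℓ ∉ S, v' ℓ = v ℓ)).card

/-- `ℵ_𝒱(s)`: the maximum over `v ∈ V` and over sets `S` of `s` positions of the number
of admissible replacements of the coordinates of `v` in the positions `S`. -/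
def alephS {p k : ℕ} (V : Finset (Fin k → Fin p × Fin p)) (s : ℕ) : ℕ :=
  V.sup fun v =>
    ((univ : Finset (Finset (Fin k))).filter (fun S => S.card = s)).sup (replCard V v)

/-- `ℵ_𝒱 = max_{1 ≤ s ≤ k−1} ℵ_𝒱(s)`. -/
def aleph {p k : ℕ} (V : Finset (Fin k → Fin p × Fin p)) : ℕ :=
  (Finset.Icc 1 (k - 1)).sup (alephS V)

/-
Write `X v = ∏ ℓ, φ_ℓ (Y (v ℓ))`. The `k` pairs of a tuple `v ∈ 𝒱` are distinct unordered pairs,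
so independence of the edges gives `E (X v) = ∏ ℓ, E φ_ℓ (Y (v ℓ))`; hence `T_𝒱 = E T̃_𝒱` and the
left-hand side is `Var T̃_𝒱 = |𝒱|⁻² ∑_{v, w ∈ 𝒱} Cov (X v, X w)`. The covariance vanishes unless
`v` and `w` share an unordered pair, and is at most `4 q_max^{2k}` since `|φ_ℓ| ≤ q_max` on
`{0, 1}`. For fixed `v`, the tuples `w` sharing a pair with `v` are found by choosing the two
positions and the orientation of the shared pair; each choice fixes one coordinate of `w` and
leaves at most `ℵ_𝒱(k - 1)` tuples. So `Var T̃_𝒱 ≤ 8 k² q_max^{2k} ℵ_𝒱 / |𝒱|`, and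
`8 k² ≤ 2^k k! (2^k - 1)²`.
-/

namespace ProbabilityTheory

variable {Ω ι : Type*} [MeasurableSpace Ω] {μ : Measure Ω}

section Independence

variable {G : ι → Ω → ℝ}

lemma iIndepFun.integral_fun_prod_comp_of_injective {κ : Type*} [Fintype κ]
    (hG : iIndepFun G μ) (hGm : ∀ i, Measurable (G i)) {e : κ → ι} (he : e.Injective)
    {f : κ → ℝ → ℝ} (hf : ∀ a, Measurable (f a)) :
    ∫ ω, ∏ a, f a (G (e a) ω) ∂μ = ∏ a, ∫ ω, f a (G (e a) ω) ∂μ :=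
  (hG.precomp he).integral_fun_prod_comp (fun a => (hGm (e a)).aemeasurable)
    (fun a => (hf a).aestronglyMeasurable)

lemma iIndepFun.indepFun_prod_comp_of_disjoint {κ₁ κ₂ : Type*} [Fintype κ₁] [Fintype κ₂]
    [DecidableEq ι] (hG : iIndepFun G μ) (hGm : ∀ i, Measurable (G i))
    {e₁ : κ₁ → ι} {e₂ : κ₂ → ι} (he : ∀ a b, e₁ a ≠ e₂ b)
    {f₁ : κ₁ → ℝ → ℝ} {f₂ : κ₂ → ℝ → ℝ} (hf₁ : ∀ a, Measurable (f₁ a))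
    (hf₂ : ∀ b, Measurable (f₂ b)) :
    IndepFun (fun ω => ∏ a, f₁ a (G (e₁ a) ω)) (fun ω => ∏ b, f₂ b (G (e₂ b) ω)) μ := by
  have hdisj : Disjoint (univ.image e₁) (univ.image e₂) := by
    simp only [disjoint_left, mem_image, mem_univ, true_and]
    rintro _ ⟨a, rfl⟩ ⟨b, hb⟩
    exact he a b hb.symm
  refine (hG.indepFun_finset _ _ hdisj hGm).comp
    (φ := fun g => ∏ a, f₁ a (g ⟨e₁ a, mem_image_of_mem e₁ (mem_univ a)⟩))
    (ψ := fun g => ∏ b, f₂ b (g ⟨e₂ b, mem_image_of_mem e₂ (mem_univ b)⟩)) ?_ ?_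
  · exact Finset.measurable_prod _ fun a _ => (hf₁ a).comp (measurable_pi_apply _)
  · exact Finset.measurable_prod _ fun b _ => (hf₂ b).comp (measurable_pi_apply _)

end Independence

lemma abs_covariance_le_of_abs_le [IsProbabilityMeasure μ] {X Y : Ω → ℝ} {a b : ℝ}
    (hX : ∀ ω, |X ω| ≤ a) (hY : ∀ ω, |Y ω| ≤ b) : |cov[X, Y; μ]| ≤ 2 * a * (2 * b) := by
  have hcentred {Z : Ω → ℝ} {c : ℝ} (hZ : ∀ ω, |Z ω| ≤ c) (ω : Ω) : |Z ω - μ[Z]| ≤ 2 * c := by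
    have hmean : |μ[Z]| ≤ c := by
      simpa using norm_integral_le_of_norm_le_const (μ := μ)
        (f := Z) (ae_of_all _ fun ω => (Real.norm_eq_abs _).le.trans (hZ ω))
    linarith [abs_sub (Z ω) μ[Z], hZ ω]
  have hprod : ∀ ω, ‖(X ω - μ[X]) * (Y ω - μ[Y])‖ ≤ 2 * a * (2 * b) := fun ω => by
    rw [Real.norm_eq_abs, abs_mul]
    exact mul_le_mul (hcentred hX ω) (hcentred hY ω) (abs_nonneg _)
      ((abs_nonneg _).trans (hcentred hX ω))
  simpa [covariance] using norm_integral_le_of_norm_le_const (μ := μ) (ae_of_all _ hprod)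

lemma variance_fun_sum_le_of_covariance_eq_zero [IsFiniteMeasure μ] {s : Finset ι}
    {X : ι → Ω → ℝ} (R : ι → ι → Prop) [DecidableRel R] {c : ℝ} {d : ℕ}
    (hX : ∀ i ∈ s, MemLp (X i) 2 μ)
    (hR : ∀ i ∈ s, ∀ j ∈ s, ¬ R i j → cov[X i, X j; μ] = 0)
    (hc : ∀ i ∈ s, ∀ j ∈ s, cov[X i, X j; μ] ≤ c) (hc0 : 0 ≤ c)
    (hd : ∀ i ∈ s, #{j ∈ s | R i j} ≤ d) :
    Var[fun ω => ∑ i ∈ s, X i ω; μ] ≤ #s * (d * c) := by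
  rw [variance_fun_sum' hX, ← nsmul_eq_mul]
  refine sum_le_card_nsmul _ _ _ fun i hi => ?_
  rw [← sum_filter_of_ne fun j hj hne => not_not.1 (mt (hR i hi j hj) hne)]
  calc ∑ j ∈ s with R i j, cov[X i, X j; μ]
      ≤ #{j ∈ s | R i j} • c := sum_le_card_nsmul _ _ _ fun j hj => hc i hi j (mem_filter.1 hj).1
    _ ≤ d * c := by
      rw [nsmul_eq_mul]
      exact mul_le_mul_of_nonneg_right (by exact_mod_cast hd i hi) hc0

end ProbabilityTheory

def SharesEdge {α : Type*} {k : ℕ} (v w : Fin k → α × α) : Prop :=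
  ∃ ℓ ℓ', s((v ℓ).1, (v ℓ).2) = s((w ℓ').1, (w ℓ').2)

instance {α : Type*} [DecidableEq α] {k : ℕ} :
    DecidableRel (SharesEdge : (Fin k → α × α) → (Fin k → α × α) → Prop) :=
  fun v w => by unfold SharesEdge; infer_instance

lemma injective_sym2Mk_of_card_inter_le_one {α : Type*} [DecidableEq α] {k : ℕ} {v : Fin k → α × α}
    (hv : ∀ ℓ, (v ℓ).1 ≠ (v ℓ).2)
    (hinter : ∀ ℓ₁ ℓ₂, ℓ₁ ≠ ℓ₂ →
      #({(v ℓ₁).1, (v ℓ₁).2} ∩ {(v ℓ₂).1, (v ℓ₂).2} : Finset α) ≤ 1) :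
    Function.Injective fun ℓ => s((v ℓ).1, (v ℓ).2) := by
  intro ℓ₁ ℓ₂ heq
  by_contra hne
  have h := hinter ℓ₁ ℓ₂ hne
  rcases Sym2.eq_iff.1 heq with ⟨h₁, h₂⟩ | ⟨h₁, h₂⟩ <;>
    simp [h₁, h₂, pair_comm, card_pair (hv ℓ₂).symm] at h

section Counting

variable {p k : ℕ} (V : Finset (Fin k → Fin p × Fin p))

lemma replCard_le_alephS {v : Fin k → Fin p × Fin p} (hv : v ∈ V) (S : Finset (Fin k)) :
    replCard V v S ≤ alephS V #S := by
  have hS : S ∈ (univ : Finset (Finset (Fin k))).filter (fun S' => #S' = #S) := by simp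
  exact (le_sup hS).trans (le_sup (f := fun w =>
    ((univ : Finset (Finset (Fin k))).filter (fun S' => #S' = #S)).sup (replCard V w)) hv)

lemma alephS_le_aleph {s : ℕ} (hs₁ : 1 ≤ s) (hs₂ : s ≤ k - 1) : alephS V s ≤ aleph V :=
  le_sup (f := alephS V) (mem_Icc.2 ⟨hs₁, hs₂⟩)

lemma card_filter_apply_eq_le_aleph (hk : 2 ≤ k) (j : Fin k) (c : Fin p × Fin p) :
    #{v ∈ V | v j = c} ≤ aleph V := by
  obtain hempty | ⟨w, hw⟩ := (V.filter fun v => v j = c).eq_empty_or_nonempty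
  · simp [hempty]
  rw [mem_filter] at hw
  have hrepl : #{v ∈ V | v j = c} = replCard V w {j}ᶜ := by
    refine congrArg card (filter_congr fun v _ => ?_)
    simp [hw.2]
  have hcard : #({j}ᶜ : Finset (Fin k)) = k - 1 := by simp [card_compl]
  rw [hrepl]
  exact (replCard_le_alephS V hw.1 _).trans (hcard ▸ alephS_le_aleph V (by omega) le_rfl)

lemma card_filter_sharesEdge_le (hk : 2 ≤ k) (v : Fin k → Fin p × Fin p) :
    #{w ∈ V | SharesEdge v w} ≤ 2 * k ^ 2 * aleph V := by
  have hsub : {w ∈ V | SharesEdge v w} ⊆ (univ : Finset (Fin k × Fin k)).biUnion fun ℓℓ' =>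
      {w ∈ V | w ℓℓ'.2 = v ℓℓ'.1} ∪ {w ∈ V | w ℓℓ'.2 = (v ℓℓ'.1).swap} := by
    intro w hw
    obtain ⟨hwV, ℓ, ℓ', hvw⟩ := mem_filter.1 hw
    simp only [mem_biUnion, mem_univ, mem_union, mem_filter, true_and]
    exact ⟨(ℓ, ℓ'), (Sym2.mk_eq_mk_iff.1 hvw.symm).imp (⟨hwV, ·⟩) (⟨hwV, ·⟩)⟩
  calc #{w ∈ V | SharesEdge v w}
      ≤ ∑ ℓℓ' : Fin k × Fin k,
          #({w ∈ V | w ℓℓ'.2 = v ℓℓ'.1} ∪ {w ∈ V | w ℓℓ'.2 = (v ℓℓ'.1).swap}) :=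
        (card_le_card hsub).trans card_biUnion_le
    _ ≤ ∑ _ℓℓ' : Fin k × Fin k, (aleph V + aleph V) := sum_le_sum fun ℓℓ' _ =>
        (card_union_le _ _).trans (add_le_add (card_filter_apply_eq_le_aleph V hk _ _)
          (card_filter_apply_eq_le_aleph V hk _ _))
    _ = 2 * k ^ 2 * aleph V := by
      simp only [sum_const, card_univ, Fintype.card_prod, Fintype.card_fin, smul_eq_mul]
      ring

end Counting

lemma eight_mul_sq_le_two_pow_mul_factorial_mul {k : ℕ} (hk : 2 ≤ k) :
    8 * (k : ℝ) ^ 2 ≤ 2 ^ k * k.factorial * (2 ^ k - 1) ^ 2 := by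
  have hk2 : (2 : ℝ) ≤ k := by exact_mod_cast hk
  have h4 : (4 : ℝ) ≤ 2 ^ k := by
    calc (4 : ℝ) = 2 ^ 2 := by norm_num
      _ ≤ 2 ^ k := pow_le_pow_right₀ one_le_two hk
  have hfact : (k : ℝ) ≤ k.factorial := by exact_mod_cast Nat.self_le_factorial k
  have hpow : (k : ℝ) ≤ 2 ^ k - 1 := by
    have : k + 1 ≤ 2 ^ k := Nat.lt_two_pow_self
    have : (k : ℝ) + 1 ≤ 2 ^ k := by exact_mod_cast this
    linarith
  calc 8 * (k : ℝ) ^ 2 ≤ 4 * k * (k : ℝ) ^ 2 := by nlinarith [sq_nonneg (k : ℝ)]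
    _ ≤ 2 ^ k * (k.factorial : ℝ) * (2 ^ k - 1) ^ 2 := by gcongr

section NoisyNetwork

variable {Ω : Type*} {p k : ℕ} {Y : Fin p → Fin p → Ω → ℝ}

def edgeOf (q : Fin p × Fin p) (h : q.1 ≠ q.2) : EdgeIdx p :=
  ⟨(q.1 ⊓ q.2, q.1 ⊔ q.2), inf_lt_sup.2 h⟩

lemma edgeOf_eq_edgeOf_iff {q q' : Fin p × Fin p} (h : q.1 ≠ q.2) (h' : q'.1 ≠ q'.2) :
    edgeOf q h = edgeOf q' h' ↔ s(q.1, q.2) = s(q'.1, q'.2) := by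
  rw [← Sym2.inf_eq_inf_and_sup_eq_sup, Subtype.ext_iff, Prod.ext_iff]
  rfl

lemma apply_edgeOf (hYsym : ∀ i j ω, Y i j ω = Y j i ω) (q : Fin p × Fin p) (h : q.1 ≠ q.2)
    (ω : Ω) : Y (edgeOf q h).1.1 (edgeOf q h).1.2 ω = Y q.1 q.2 ω := by
  rcases le_total q.1 q.2 with hq | hq
  · simp only [edgeOf, inf_eq_left.2 hq, sup_eq_right.2 hq]
  · simp only [edgeOf, inf_eq_right.2 hq, sup_eq_left.2 hq]
    exact hYsym _ _ _

def phi (α β : ℝ) (t : ℕ) (x : ℝ) : ℝ := (x - α) ^ t * (1 - β - x) ^ (1 - t)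

lemma measurable_phi (α β : ℝ) (t : ℕ) : Measurable (phi α β t) := by
  unfold phi
  fun_prop

lemma abs_phi_le {α β x : ℝ} {t : ℕ} (ht : t = 0 ∨ t = 1) (hx : x = 0 ∨ x = 1) :
    |phi α β t x| ≤ max (max α (1 - α)) (max β (1 - β)) := by
  have := le_max_left (max α (1 - α)) (max β (1 - β))
  have := le_max_right (max α (1 - α)) (max β (1 - β))
  rcases ht with rfl | rfl <;> rcases hx with rfl | rfl <;> simp only [phi] <;> rw [abs_le] <;>
    constructor <;> norm_num <;>
    linarith [le_max_left α (1 - α), le_max_right α (1 - α), le_max_left β (1 - β),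
      le_max_right β (1 - β)]

def subgraphProd (φ : Fin k → ℝ → ℝ) (Y : Fin p → Fin p → Ω → ℝ)
    (v : Fin k → Fin p × Fin p) (ω : Ω) : ℝ :=
  ∏ ℓ, φ ℓ (Y (v ℓ).1 (v ℓ).2 ω)

variable {φ : Fin k → ℝ → ℝ}

lemma abs_subgraphProd_le {c : ℝ} (hc : ∀ ℓ i j ω, |φ ℓ (Y i j ω)| ≤ c)
    (v : Fin k → Fin p × Fin p) (ω : Ω) : |subgraphProd φ Y v ω| ≤ c ^ k := by
  rw [subgraphProd, abs_prod]
  calc ∏ ℓ, |φ ℓ (Y (v ℓ).1 (v ℓ).2 ω)| ≤ ∏ _ℓ : Fin k, c :=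
        prod_le_prod (fun _ _ => abs_nonneg _) fun ℓ _ => hc ℓ _ _ ω
    _ = c ^ k := by simp

lemma subgraphProd_eq_prod_edgeOf (hYsym : ∀ i j ω, Y i j ω = Y j i ω)
    {v : Fin k → Fin p × Fin p} (hv : ∀ ℓ, (v ℓ).1 ≠ (v ℓ).2) :
    subgraphProd φ Y v = fun ω => ∏ ℓ,
      φ ℓ (Y (edgeOf (v ℓ) (hv ℓ)).1.1 (edgeOf (v ℓ) (hv ℓ)).1.2 ω) := by
  funext ω
  simp only [subgraphProd, apply_edgeOf hYsym]

variable [MeasurableSpace Ω] {μ : Measure Ω}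

lemma measurable_subgraphProd (hYmeas : ∀ i j, Measurable (Y i j))
    (hφ : ∀ ℓ, Measurable (φ ℓ)) (v : Fin k → Fin p × Fin p) :
    Measurable (subgraphProd φ Y v) :=
  Finset.measurable_prod _ fun ℓ _ => (hφ ℓ).comp (hYmeas _ _)

lemma memLp_subgraphProd [IsFiniteMeasure μ] (hYmeas : ∀ i j, Measurable (Y i j))
    (hφ : ∀ ℓ, Measurable (φ ℓ)) {c : ℝ} (hc : ∀ ℓ i j ω, |φ ℓ (Y i j ω)| ≤ c)
    (q : ENNReal) (v : Fin k → Fin p × Fin p) : MemLp (subgraphProd φ Y v) q μ :=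
  .of_bound (measurable_subgraphProd hYmeas hφ v).aestronglyMeasurable _
    (ae_of_all _ (abs_subgraphProd_le hc v))

lemma integral_subgraphProd
    (hindep : iIndepFun (fun (e : EdgeIdx p) ω => Y e.1.1 e.1.2 ω) μ)
    (hYmeas : ∀ i j, Measurable (Y i j)) (hYsym : ∀ i j ω, Y i j ω = Y j i ω)
    (hφ : ∀ ℓ, Measurable (φ ℓ)) {v : Fin k → Fin p × Fin p}
    (hv : ∀ ℓ, (v ℓ).1 ≠ (v ℓ).2)
    (hinj : Function.Injective fun ℓ => s((v ℓ).1, (v ℓ).2)) :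
    ∫ ω, subgraphProd φ Y v ω ∂μ = ∏ ℓ, ∫ ω, φ ℓ (Y (v ℓ).1 (v ℓ).2 ω) ∂μ := by
  rw [subgraphProd_eq_prod_edgeOf hYsym hv]
  refine (hindep.integral_fun_prod_comp_of_injective (fun e => hYmeas _ _)
    (e := fun ℓ => edgeOf (v ℓ) (hv ℓ))
    (fun ℓ ℓ' h => hinj ((edgeOf_eq_edgeOf_iff _ _).1 h)) hφ).trans ?_
  simp only [apply_edgeOf hYsym]

lemma indepFun_subgraphProd
    (hindep : iIndepFun (fun (e : EdgeIdx p) ω => Y e.1.1 e.1.2 ω) μ)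
    (hYmeas : ∀ i j, Measurable (Y i j)) (hYsym : ∀ i j ω, Y i j ω = Y j i ω)
    (hφ : ∀ ℓ, Measurable (φ ℓ)) {v w : Fin k → Fin p × Fin p}
    (hv : ∀ ℓ, (v ℓ).1 ≠ (v ℓ).2)
    (hw : ∀ ℓ, (w ℓ).1 ≠ (w ℓ).2) (hvw : ¬ SharesEdge v w) :
    IndepFun (subgraphProd φ Y v) (subgraphProd φ Y w) μ := by
  rw [subgraphProd_eq_prod_edgeOf hYsym hv, subgraphProd_eq_prod_edgeOf hYsym hw]
  exact hindep.indepFun_prod_comp_of_disjoint (fun e => hYmeas _ _)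
    (fun ℓ ℓ' h => hvw ⟨ℓ, ℓ', (edgeOf_eq_edgeOf_iff _ _).1 h⟩) hφ hφ

lemma variance_sum_subgraphProd_le [IsProbabilityMeasure μ]
    (hindep : iIndepFun (fun (e : EdgeIdx p) ω => Y e.1.1 e.1.2 ω) μ)
    (hYmeas : ∀ i j, Measurable (Y i j)) (hYsym : ∀ i j ω, Y i j ω = Y j i ω)
    (hφ : ∀ ℓ, Measurable (φ ℓ)) {c : ℝ}
    (hc : ∀ ℓ i j ω, |φ ℓ (Y i j ω)| ≤ c) (hc0 : 0 ≤ c) (hk : 2 ≤ k)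
    {V : Finset (Fin k → Fin p × Fin p)} (hV : ∀ v ∈ V, ∀ ℓ, (v ℓ).1 ≠ (v ℓ).2) :
    Var[fun ω => ∑ v ∈ V, subgraphProd φ Y v ω; μ] ≤ #V * (8 * k ^ 2 * aleph V * c ^ (2 * k)) :=
  (variance_fun_sum_le_of_covariance_eq_zero SharesEdge
    (fun v _ => memLp_subgraphProd hYmeas hφ hc 2 v)
    (fun v hv w hw hvw => (indepFun_subgraphProd hindep hYmeas hYsym hφ (hV v hv) (hV w hw)
      hvw).covariance_eq_zero (memLp_subgraphProd hYmeas hφ hc 2 v)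
      (memLp_subgraphProd hYmeas hφ hc 2 w))
    (fun v _ w _ => (le_abs_self _).trans
      (abs_covariance_le_of_abs_le (abs_subgraphProd_le hc v) (abs_subgraphProd_le hc w)))
    (by positivity) (fun v _ => card_filter_sharesEdge_le V hk v)).trans_eq
    (by push_cast; ring)

end NoisyNetwork

theorem second_moment_bound_subgraph_estimator_general
    {Ω : Type*} [MeasurableSpace Ω] (μ : Measure Ω) [IsProbabilityMeasure μ]
    (p : ℕ)
    (α β : ℝ)
    (Y : Fin p → Fin p → Ω → ℝ)
    (hYmeas : ∀ i j, Measurable (Y i j))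
    (hY01 : ∀ i j ω, Y i j ω = 0 ∨ Y i j ω = 1)
    (hYsym : ∀ i j ω, Y i j ω = Y j i ω)
    -- the observed edge indicators are independent across unordered vertex pairs
    (hindep : iIndepFun
      (fun (e : EdgeIdx p) ω => Y e.1.1 e.1.2 ω) μ)
    (k : ℕ) (hk : 2 ≤ k)
    (V : Finset (Fin k → Fin p × Fin p))
    (hV : ∀ v ∈ V, (∀ ℓ, (v ℓ).1 ≠ (v ℓ).2) ∧
      ∀ ℓ₁ ℓ₂, ℓ₁ ≠ ℓ₂ →
        (({(v ℓ₁).1, (v ℓ₁).2} ∩ {(v ℓ₂).1, (v ℓ₂).2} : Finset (Fin p)).card ≤ 1))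
    (τ : Fin k → ℕ) (hτ : ∀ ℓ, τ ℓ = 0 ∨ τ ℓ = 1)
    (qmax : ℝ) (hqmax : qmax = max (max α (1 - α)) (max β (1 - β)))
    (T : ℝ)
    (hT : T = (V.card : ℝ)⁻¹ * ∑ v ∈ V, ∏ ℓ,
      ∫ ω, (Y (v ℓ).1 (v ℓ).2 ω - α) ^ τ ℓ *
        (1 - β - Y (v ℓ).1 (v ℓ).2 ω) ^ (1 - τ ℓ) ∂μ) :
    ∫ ω, ((V.card : ℝ)⁻¹ * (∑ v ∈ V, ∏ ℓ,
          (Y (v ℓ).1 (v ℓ).2 ω - α) ^ τ ℓ *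
            (1 - β - Y (v ℓ).1 (v ℓ).2 ω) ^ (1 - τ ℓ)) - T) ^ 2 ∂μ
      ≤ 2 ^ k * (Nat.factorial k : ℝ) * qmax ^ (2 * k) * ((2 : ℝ) ^ k - 1) ^ 2 *
          (aleph V : ℝ) / (V.card : ℝ) := by
  set φ : Fin k → ℝ → ℝ := fun ℓ => phi α β (τ ℓ)
  have hφ : ∀ ℓ, Measurable (φ ℓ) := fun ℓ => measurable_phi α β (τ ℓ)
  have hφ_le : ∀ ℓ i j ω, |φ ℓ (Y i j ω)| ≤ qmax :=
    fun ℓ i j ω => hqmax ▸ abs_phi_le (hτ ℓ) (hY01 i j ω)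
  have hq0 : 0 ≤ qmax := by
    rw [hqmax]
    linarith [le_max_left (max α (1 - α)) (max β (1 - β)), le_max_left α (1 - α),
      le_max_right α (1 - α)]
  have hX : ∀ v, Measurable (subgraphProd φ Y v) := measurable_subgraphProd hYmeas hφ
  set n : ℝ := (V.card : ℝ)
  have hmean : T = μ[fun ω => n⁻¹ * ∑ v ∈ V, subgraphProd φ Y v ω] := by
    rw [hT, integral_const_mul, integral_finsetSum _ fun v _ =>
      (memLp_subgraphProd hYmeas hφ hφ_le 1 v).integrable le_rfl]
    exact congrArg _ (sum_congr rfl fun v hv => (integral_subgraphProd hindep hYmeas hYsym hφ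
      (hV v hv).1 (injective_sym2Mk_of_card_inter_le_one (hV v hv).1 (hV v hv).2)).symm)
  calc _ = Var[fun ω => n⁻¹ * ∑ v ∈ V, subgraphProd φ Y v ω; μ] := by
        rw [hmean, variance_eq_integral (by fun_prop)]
        rfl
    _ = n⁻¹ ^ 2 * Var[fun ω => ∑ v ∈ V, subgraphProd φ Y v ω; μ] := variance_const_mul _ _ _
    _ ≤ n⁻¹ ^ 2 * (n * (8 * k ^ 2 * aleph V * qmax ^ (2 * k))) := by
        gcongr
        exact variance_sum_subgraphProd_le hindep hYmeas hYsym hφ hφ_le hq0 hk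
          fun v hv => (hV v hv).1
    _ = 8 * k ^ 2 * (qmax ^ (2 * k) * aleph V) / n := by
        rcases eq_or_ne n 0 with hn | hn
        · simp [hn]
        · field_simp
    _ ≤ 2 ^ k * k.factorial * (2 ^ k - 1) ^ 2 * (qmax ^ (2 * k) * aleph V) / n := by
        gcongr ?_ * _ / _
        exact eight_mul_sq_le_two_pow_mul_factorial_mul hk
    _ = _ := by ring

/-- Quantitative second-moment bound underlying Proposition 2: with
`T̃_𝒱 = |𝒱|⁻¹ ∑_{v∈𝒱} ∏_ℓ φ_ℓ(Y_{i_ℓ,i_ℓ'})` and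
`T_𝒱 = |𝒱|⁻¹ ∑_{v∈𝒱} ∏_ℓ E{φ_ℓ(Y_{i_ℓ,i_ℓ'})}`, where
`φ_ℓ(x) = (x−α)^{τ_ℓ}(1−β−x)^{1−τ_ℓ}`, one has
`E{|T̃_𝒱 − T_𝒱|²} ≤ 2^k k! q_max^{2k} (2^k−1)² ℵ_𝒱 / |𝒱|`,
where `q_max = max{α, 1−α, β, 1−β}`. -/
theorem second_moment_bound_subgraph_estimator
    {Ω : Type*} [MeasurableSpace Ω] (μ : Measure Ω) [IsProbabilityMeasure μ]
    (p : ℕ) (hp : 2 ≤ p)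
    (A : Fin p → Fin p → ℝ)
    (hA01 : ∀ i j, A i j = 0 ∨ A i j = 1)
    (hAsym : ∀ i j, A i j = A j i) (hAdiag : ∀ i, A i i = 0)
    (α β : ℝ) (hα0 : 0 ≤ α) (hα1 : α ≤ 1) (hβ0 : 0 ≤ β) (hβ1 : β ≤ 1)
    (hαβ : α + β ≤ 1)
    (Y : Fin p → Fin p → Ω → ℝ)
    (hYmeas : ∀ i j, Measurable (Y i j))
    (hY01 : ∀ i j ω, Y i j ω = 0 ∨ Y i j ω = 1)
    (hYsym : ∀ i j ω, Y i j ω = Y j i ω)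
    (hYdist : ∀ i j : Fin p, i ≠ j →
      μ {ω | Y i j ω = 1} = ENNReal.ofReal (if A i j = 1 then 1 - β else α))
    -- the observed edge indicators are independent across unordered vertex pairs
    (hindep : iIndepFun
      (fun (e : EdgeIdx p) ω => Y e.1.1 e.1.2 ω) μ)
    (k : ℕ) (hk : 2 ≤ k)
    (V : Finset (Fin k → Fin p × Fin p)) (hVne : V.Nonempty)
    (hV : ∀ v ∈ V, (∀ ℓ, (v ℓ).1 ≠ (v ℓ).2) ∧
      ∀ ℓ₁ ℓ₂, ℓ₁ ≠ ℓ₂ →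
        (({(v ℓ₁).1, (v ℓ₁).2} ∩ {(v ℓ₂).1, (v ℓ₂).2} : Finset (Fin p)).card ≤ 1))
    (τ : Fin k → ℕ) (hτ : ∀ ℓ, τ ℓ = 0 ∨ τ ℓ = 1)
    (qmax : ℝ) (hqmax : qmax = max (max α (1 - α)) (max β (1 - β)))
    (T : ℝ)
    (hT : T = (V.card : ℝ)⁻¹ * ∑ v ∈ V, ∏ ℓ,
      ∫ ω, (Y (v ℓ).1 (v ℓ).2 ω - α) ^ τ ℓ *
        (1 - β - Y (v ℓ).1 (v ℓ).2 ω) ^ (1 - τ ℓ) ∂μ) :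
    ∫ ω, ((V.card : ℝ)⁻¹ * (∑ v ∈ V, ∏ ℓ,
          (Y (v ℓ).1 (v ℓ).2 ω - α) ^ τ ℓ *
            (1 - β - Y (v ℓ).1 (v ℓ).2 ω) ^ (1 - τ ℓ)) - T) ^ 2 ∂μ
      ≤ 2 ^ k * (Nat.factorial k : ℝ) * qmax ^ (2 * k) * ((2 : ℝ) ^ k - 1) ^ 2 *
          (aleph V : ℝ) / (V.card : ℝ) :=
  second_moment_bound_subgraph_estimator_general μ p α β Y hYmeas hY01 hYsym hindep k hk V hV τ hτ
    qmax hqmax T hT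
end

section
/- (Validity of the bootstrap noise distribution.) Let α, β ∈ [0,1], let γ₁, γ₂ satisfy γ₁ > 0, γ₂ > 0, γ₁ + γ₂ < 1, γ₁(1−γ₁−2γ₂) = β − α, and γ₂(1−γ₂) = α(1−β). Let A ∈ {0,1}, let Y be a {0,1}-valued random variable with P(Y=1) = A(1−α−β) + α, let η be independent of Y with P(η=0)=γ₁, P(η=1)=γ₂, P(η=−1)=1−γ₁−γ₂, and set Y† = Y·I(η=0) + I(η=1). Then: (i) (γ₁+γ₂)(1−γ₁−γ₂) = β(1−α); (ii) the conditional variance of Y† given Y satisfies Var(Y† | Y) = Y(β−α) + α(1−β) almost surely; and (iii) E{Var(Y† | Y)} = Var(Y). -/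
open MeasureTheory ProbabilityTheory

/-!
Given `Y = y`, the noise `η` keeps its law by independence, so `Y† = y·I(η=0) + I(η=1)` is a
`{0,1}`-valued variable with mean `q = yγ₁ + γ₂` and variance `q(1 − q)`: this is
`γ₂(1 − γ₂) = α(1 − β)` for `y = 0` and `(γ₁ + γ₂)(1 − γ₁ − γ₂) = β(1 − α)` for `y = 1`, the latter
identity being the sum of the two equations defining `γ₁, γ₂`. The variable `Y` is `{0,1}`-valued
as well, with mean `p ∈ {α, 1 − β}`, and `p(1 − p) − (p(β − α) + α(1 − β)) = −(p − α)(p − (1 − β))`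
vanishes, which is (iii).
-/

section ZeroOne

variable {Ω : Type*} {X : Ω → ℝ}

lemma eq_indicator_of_mem_zero_one (h01 : ∀ ω, X ω = 0 ∨ X ω = 1) :
    X = {ω | X ω = 1}.indicator 1 := by
  funext ω
  rcases h01 ω with h | h <;> simp [h]

variable [MeasurableSpace Ω] {μ : Measure Ω}

lemma integral_eq_measureReal_of_mem_zero_one (hX : Measurable X)
    (h01 : ∀ ω, X ω = 0 ∨ X ω = 1) : ∫ ω, X ω ∂μ = μ.real {ω | X ω = 1} := by
  conv_lhs => rw [eq_indicator_of_mem_zero_one h01]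
  exact integral_indicator_one (hX (measurableSet_singleton 1))

lemma memLp_of_mem_zero_one [IsFiniteMeasure μ] (hX : Measurable X)
    (h01 : ∀ ω, X ω = 0 ∨ X ω = 1) (p : ENNReal) : MemLp X p μ :=
  MemLp.of_bound hX.aestronglyMeasurable 1 <| ae_of_all _ fun ω => by
    rcases h01 ω with h | h <;> simp [h]

lemma variance_eq_of_mem_zero_one [IsProbabilityMeasure μ] (hX : Measurable X)
    (h01 : ∀ ω, X ω = 0 ∨ X ω = 1) : variance X μ = μ[X] * (1 - μ[X]) := by
  have hsq : X ^ 2 = X := by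
    funext ω
    rcases h01 ω with h | h <;> simp [h]
  rw [variance_eq_sub (memLp_of_mem_zero_one hX h01 2), hsq]
  ring

end ZeroOne

lemma ProbabilityTheory.IndepFun.cond_preimage_apply {Ω β γ : Type*} [MeasurableSpace Ω]
    [MeasurableSpace β] [MeasurableSpace γ] {μ : Measure Ω} [IsFiniteMeasure μ]
    {Y : Ω → β} {η : Ω → γ} (hindep : IndepFun Y η μ) (hY : Measurable Y)
    {s : Set β} {t : Set γ} (hs : MeasurableSet s) (ht : MeasurableSet t)
    (hne : μ (Y ⁻¹' s) ≠ 0) : μ[η ⁻¹' t | Y ⁻¹' s] = μ (η ⁻¹' t) := by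
  rw [cond_apply (hY hs), hindep.measure_inter_preimage_eq_mul s t hs ht, ← mul_assoc,
    ENNReal.inv_mul_cancel hne (measure_ne_top μ _), one_mul]

section Bootstrap

variable {Ω : Type*} {Y η : Ω → ℝ}

noncomputable def bootstrapReplicate (Y η : Ω → ℝ) (ω : Ω) : ℝ :=
  Y ω * (if η ω = 0 then 1 else 0) + (if η ω = 1 then 1 else 0)

lemma bootstrapReplicate_mem_zero_one (hY01 : ∀ ω, Y ω = 0 ∨ Y ω = 1) (ω : Ω) :
    bootstrapReplicate Y η ω = 0 ∨ bootstrapReplicate Y η ω = 1 := by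
  unfold bootstrapReplicate
  by_cases h1 : η ω = 1
  · simp [h1]
  · by_cases h0 : η ω = 0 <;> simp [h0, h1, hY01 ω]

variable [MeasurableSpace Ω] {μ : Measure Ω}

lemma measurable_bootstrapReplicate (hY : Measurable Y) (hη : Measurable η) :
    Measurable (bootstrapReplicate Y η) :=
  (hY.mul (Measurable.ite (hη (measurableSet_singleton 0)) measurable_const
    measurable_const)).add
    (Measurable.ite (hη (measurableSet_singleton 1)) measurable_const measurable_const)

lemma integral_bootstrapReplicate_cond [IsFiniteMeasure μ] (hY : Measurable Y)
    (hη : Measurable η) (hindep : IndepFun Y η μ) {y : ℝ} (hne : μ {ω | Y ω = y} ≠ 0) :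
    ∫ ω, bootstrapReplicate Y η ω ∂μ[|{ω | Y ω = y}] =
      y * μ.real {ω | η ω = 0} + μ.real {ω | η ω = 1} := by
  have hν : ∀ e : ℝ, (μ[|{ω | Y ω = y}]).real {ω | η ω = e} = μ.real {ω | η ω = e} :=
    fun e => congrArg ENNReal.toReal <| hindep.cond_preimage_apply hY
      (measurableSet_singleton y) (measurableSet_singleton e) hne
  have hae : bootstrapReplicate Y η =ᵐ[μ[|{ω | Y ω = y}]]
      fun ω => y * {ω | η ω = 0}.indicator 1 ω + {ω | η ω = 1}.indicator 1 ω := by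
    filter_upwards [ae_cond_mem (hY (measurableSet_singleton y))] with ω hω
    simp [bootstrapReplicate, Set.indicator_apply, show Y ω = y from hω]
  have hs : ∀ e : ℝ, MeasurableSet {ω | η ω = e} := fun e => hη (measurableSet_singleton e)
  have hint : ∀ e : ℝ, Integrable ({ω | η ω = e}.indicator 1) (μ[|{ω | Y ω = y}]) :=
    fun e => (integrable_indicator_iff (hs e)).2 (integrable_const (1 : ℝ)).integrableOn
  rw [integral_congr_ae hae, integral_add ((hint 0).const_mul y) (hint 1), integral_const_mul,
    integral_indicator_one (hs 0), integral_indicator_one (hs 1), hν, hν]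

end Bootstrap

theorem bootstrap_noise_validity_general
    {Ω : Type*} [MeasurableSpace Ω] (μ : Measure Ω) [IsProbabilityMeasure μ]
    (A : ℝ) (hA : A = 0 ∨ A = 1)
    (α β : ℝ) (hα0 : 0 ≤ α) (hβ1 : β ≤ 1)
    (γ₁ γ₂ : ℝ) (hγ₁ : 0 < γ₁) (hγ₂ : 0 < γ₂)
    (heq1 : γ₁ * (1 - γ₁ - 2 * γ₂) = β - α)
    (heq2 : γ₂ * (1 - γ₂) = α * (1 - β))
    (Y η : Ω → ℝ) (hYmeas : Measurable Y) (hηmeas : Measurable η)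
    (hY01 : ∀ ω, Y ω = 0 ∨ Y ω = 1)
    (hYdist : μ {ω | Y ω = 1} = ENNReal.ofReal (A * (1 - α - β) + α))
    (hη0 : μ {ω | η ω = 0} = ENNReal.ofReal γ₁)
    (hη1 : μ {ω | η ω = 1} = ENNReal.ofReal γ₂)
    (hindep : IndepFun Y η μ)
    (Ydag : Ω → ℝ)
    (hYdag : ∀ ω, Ydag ω = Y ω * (if η ω = 0 then 1 else 0) + (if η ω = 1 then 1 else 0)) :
    (γ₁ + γ₂) * (1 - γ₁ - γ₂) = β * (1 - α) ∧
    (∀ y : ℝ, (y = 0 ∨ y = 1) → μ {ω | Y ω = y} ≠ 0 →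
      variance Ydag (μ[|{ω | Y ω = y}]) = y * (β - α) + α * (1 - β)) ∧
    ∫ ω, (Y ω * (β - α) + α * (1 - β)) ∂μ = variance Y μ := by
  obtain rfl : Ydag = bootstrapReplicate Y η := funext hYdag
  refine ⟨by linear_combination heq1 + heq2, fun y hy hne => ?_, ?_⟩
  · have := cond_isProbabilityMeasure hne
    rw [variance_eq_of_mem_zero_one (measurable_bootstrapReplicate hYmeas hηmeas)
        (bootstrapReplicate_mem_zero_one hY01),
      integral_bootstrapReplicate_cond hYmeas hηmeas hindep hne, measureReal_def,
      measureReal_def, hη0, hη1, ENNReal.toReal_ofReal hγ₁.le, ENNReal.toReal_ofReal hγ₂.le]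
    rcases hy with rfl | rfl
    · linear_combination heq2
    · linear_combination heq1 + heq2
  · have hp : 0 ≤ A * (1 - α - β) + α := by rcases hA with rfl | rfl <;> linarith
    have hmean : μ[Y] = A * (1 - α - β) + α := by
      rw [integral_eq_measureReal_of_mem_zero_one hYmeas hY01, measureReal_def, hYdist,
        ENNReal.toReal_ofReal hp]
    rw [variance_eq_of_mem_zero_one hYmeas hY01, integral_add
        (((memLp_of_mem_zero_one hYmeas hY01 1).integrable le_rfl).mul_const _)
        (integrable_const _),
      integral_mul_const, integral_const, probReal_univ, one_smul, hmean]
    rcases hA with rfl | rfl <;> ring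

/-- Validity of the bootstrap noise distribution (single-edge version): if
`γ₁, γ₂ > 0`, `γ₁ + γ₂ < 1`, `γ₁(1−γ₁−2γ₂) = β−α` and `γ₂(1−γ₂) = α(1−β)`, and the
bootstrap replicate is `Y† = Y·I(η=0) + I(η=1)` with `η` independent of `Y`, then
(i) `(γ₁+γ₂)(1−γ₁−γ₂) = β(1−α)`;
(ii) the conditional variance of `Y†` given `Y` satisfies
`Var(Y† | Y = y) = y(β−α) + α(1−β)` for `y ∈ {0,1}` (whenever `P(Y = y) ≠ 0`);
(iii) `E{Var(Y† | Y)} = Var(Y)`, i.e. `∫ (Y(β−α) + α(1−β)) dμ = Var(Y)`. -/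
theorem bootstrap_noise_validity
    {Ω : Type*} [MeasurableSpace Ω] (μ : Measure Ω) [IsProbabilityMeasure μ]
    (A : ℝ) (hA : A = 0 ∨ A = 1)
    (α β : ℝ) (hα0 : 0 ≤ α) (hα1 : α ≤ 1) (hβ0 : 0 ≤ β) (hβ1 : β ≤ 1)
    (γ₁ γ₂ : ℝ) (hγ₁ : 0 < γ₁) (hγ₂ : 0 < γ₂) (hγsum : γ₁ + γ₂ < 1)
    (heq1 : γ₁ * (1 - γ₁ - 2 * γ₂) = β - α)
    (heq2 : γ₂ * (1 - γ₂) = α * (1 - β))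
    (Y η : Ω → ℝ) (hYmeas : Measurable Y) (hηmeas : Measurable η)
    (hY01 : ∀ ω, Y ω = 0 ∨ Y ω = 1)
    (hηval : ∀ ω, η ω = -1 ∨ η ω = 0 ∨ η ω = 1)
    (hYdist : μ {ω | Y ω = 1} = ENNReal.ofReal (A * (1 - α - β) + α))
    (hη0 : μ {ω | η ω = 0} = ENNReal.ofReal γ₁)
    (hη1 : μ {ω | η ω = 1} = ENNReal.ofReal γ₂)
    (hηm1 : μ {ω | η ω = -1} = ENNReal.ofReal (1 - γ₁ - γ₂))
    (hindep : IndepFun Y η μ)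
    (Ydag : Ω → ℝ)
    (hYdag : ∀ ω, Ydag ω = Y ω * (if η ω = 0 then 1 else 0) + (if η ω = 1 then 1 else 0)) :
    (γ₁ + γ₂) * (1 - γ₁ - γ₂) = β * (1 - α) ∧
    (∀ y : ℝ, (y = 0 ∨ y = 1) → μ {ω | Y ω = y} ≠ 0 →
      variance Ydag (μ[|{ω | Y ω = y}]) = y * (β - α) + α * (1 - β)) ∧
    ∫ ω, (Y ω * (β - α) + α * (1 - β)) ∂μ = variance Y μ :=
  bootstrap_noise_validity_general μ A hA α β hα0 hβ1 γ₁ γ₂ hγ₁ hγ₂ heq1 heq2 Y η hYmeas hηmeas hY01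
    hYdist hη0 hη1 hindep Ydag hYdag
end

section
/- (Jacobian determinant identity for three estimating equations.) Define g₁(x,y,z) = (1−z)x + z(1−y), g₂(x,y,z) = (1−z)x(1−x) + z·y(1−y), and g₃(x,y,z) = (1−z)x(1−x)² + z·y²(1−y) on ℝ³. Then for all real x, y, z, the determinant of the 3×3 Jacobian matrix of (g₁, g₂, g₃) with respect to (x, y, z), evaluated at (x,y,z), equals −(1−z)·z·(1−x−y)⁴. -/
/-- The population moment map `g₁(x,y,z) = (1−z)x + z(1−y)` of the noisy
network model (`x` = Type I error rate, `y` = Type II error rate, `z` = edge density). -/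
noncomputable def g₁ (x y z : ℝ) : ℝ := (1 - z) * x + z * (1 - y)

/-- The population moment map `g₂(x,y,z) = (1−z)x(1−x) + zy(1−y)`. -/
noncomputable def g₂ (x y z : ℝ) : ℝ := (1 - z) * x * (1 - x) + z * (y * (1 - y))

/-- The population moment map `g₃(x,y,z) = (1−z)x(1−x)² + zy²(1−y)`. -/
noncomputable def g₃ (x y z : ℝ) : ℝ := (1 - z) * x * (1 - x) ^ 2 + z * (y ^ 2 * (1 - y))

/-!
Each `gₖ` has the form `(1 - z) pₖ(x) + z pₖ(1 - y)`: a non-edge (probability `1 - z`) is observed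
as an edge with probability `x`, an edge with probability `1 - y`. Hence the Jacobian columns are
`(1 - z) p'(x)`, `-z p'(w)` and `p(w) - p(x)` with `w = 1 - y`, so the determinant is `-(1 - z) z`
times a determinant in `x` and `w` alone; for `p = t, t(1 - t), t(1 - t)²` it equals `(w - x)⁴`.
-/

noncomputable def bernoulliMixture (p : ℝ → ℝ) (x y z : ℝ) : ℝ := (1 - z) * p x + z * p (1 - y)

section bernoulliMixture

variable {p : ℝ → ℝ} {x y z : ℝ}

theorem deriv_bernoulliMixture_fst (hp : DifferentiableAt ℝ p x) :
    deriv (fun x' => bernoulliMixture p x' y z) x = (1 - z) * deriv p x :=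
  ((hp.hasDerivAt.const_mul (1 - z)).add_const (z * p (1 - y))).deriv

theorem deriv_bernoulliMixture_snd (hp : DifferentiableAt ℝ p (1 - y)) :
    deriv (fun y' => bernoulliMixture p x y' z) y = -(z * deriv p (1 - y)) := by
  have h : HasDerivAt (fun y' => bernoulliMixture p x y' z) (z * (deriv p (1 - y) * -1)) y :=
    (hp.hasDerivAt.comp y ((hasDerivAt_id' y).const_sub 1) |>.const_mul z).const_add _
  rw [h.deriv]
  ring

theorem deriv_bernoulliMixture_thd :
    deriv (fun z' => bernoulliMixture p x y z') z = p (1 - y) - p x := by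
  have h : HasDerivAt (fun z' => bernoulliMixture p x y z') (-1 * p x + 1 * p (1 - y)) z :=
    ((hasDerivAt_id' z).const_sub 1 |>.mul_const (p x)).add ((hasDerivAt_id' z).mul_const _)
  rw [h.deriv]
  ring

end bernoulliMixture

theorem det_jacobian_bernoulliMixture {p₁ p₂ p₃ : ℝ → ℝ} (h₁ : Differentiable ℝ p₁)
    (h₂ : Differentiable ℝ p₂) (h₃ : Differentiable ℝ p₃) (x y z : ℝ) :
    Matrix.det
      !![deriv (fun x' => bernoulliMixture p₁ x' y z) x,
          deriv (fun y' => bernoulliMixture p₁ x y' z) y,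
          deriv (fun z' => bernoulliMixture p₁ x y z') z;
        deriv (fun x' => bernoulliMixture p₂ x' y z) x,
          deriv (fun y' => bernoulliMixture p₂ x y' z) y,
          deriv (fun z' => bernoulliMixture p₂ x y z') z;
        deriv (fun x' => bernoulliMixture p₃ x' y z) x,
          deriv (fun y' => bernoulliMixture p₃ x y' z) y,
          deriv (fun z' => bernoulliMixture p₃ x y z') z]
      = -((1 - z) * z) * Matrix.det
      !![deriv p₁ x, deriv p₁ (1 - y), p₁ (1 - y) - p₁ x;
        deriv p₂ x, deriv p₂ (1 - y), p₂ (1 - y) - p₂ x;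
        deriv p₃ x, deriv p₃ (1 - y), p₃ (1 - y) - p₃ x] := by
  simp only [deriv_bernoulliMixture_fst (h₁ x), deriv_bernoulliMixture_fst (h₂ x),
    deriv_bernoulliMixture_fst (h₃ x), deriv_bernoulliMixture_snd (h₁ (1 - y)),
    deriv_bernoulliMixture_snd (h₂ (1 - y)), deriv_bernoulliMixture_snd (h₃ (1 - y)),
    deriv_bernoulliMixture_thd, Matrix.det_fin_three, Matrix.of_apply, Matrix.cons_val',
    Matrix.cons_val_zero, Matrix.cons_val_one, Matrix.cons_val_two, Matrix.empty_val',
    Matrix.cons_val_fin_one, Matrix.vecHead, Matrix.tail_cons]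
  ring

theorem g₁_eq_bernoulliMixture : g₁ = bernoulliMixture fun t => t := by
  funext x y z
  simp only [g₁, bernoulliMixture]

theorem g₂_eq_bernoulliMixture : g₂ = bernoulliMixture fun t => t * (1 - t) := by
  funext x y z
  simp only [g₂, bernoulliMixture]
  ring

theorem g₃_eq_bernoulliMixture : g₃ = bernoulliMixture fun t => t * (1 - t) ^ 2 := by
  funext x y z
  simp only [g₃, bernoulliMixture]
  ring

theorem deriv_mul_one_sub (x : ℝ) : deriv (fun t : ℝ => t * (1 - t)) x = 1 - 2 * x := by
  have h : HasDerivAt (fun t : ℝ => t * (1 - t)) (1 * (1 - x) + x * -1) x :=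
    (hasDerivAt_id' x).mul ((hasDerivAt_id' x).const_sub 1)
  rw [h.deriv]
  ring

theorem deriv_mul_one_sub_sq (x : ℝ) :
    deriv (fun t : ℝ => t * (1 - t) ^ 2) x = (1 - x) * (1 - 3 * x) := by
  have h : HasDerivAt (fun t : ℝ => t * (1 - t) ^ 2)
      (1 * (1 - x) ^ 2 + x * (2 * (1 - x) ^ 1 * -1)) x :=
    (hasDerivAt_id' x).mul (((hasDerivAt_id' x).const_sub 1).pow 2)
  rw [h.deriv]
  ring

/-- Jacobian determinant identity for the three estimating equations: the determinant
of the Jacobian of `(g₁, g₂, g₃)` with respect to `(x, y, z)` equals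
`−(1−z)z(1−x−y)⁴`. -/
theorem jacobian_det_three_equations (x y z : ℝ) :
    Matrix.det
      !![deriv (fun x' => g₁ x' y z) x, deriv (fun y' => g₁ x y' z) y, deriv (fun z' => g₁ x y z') z;
         deriv (fun x' => g₂ x' y z) x, deriv (fun y' => g₂ x y' z) y, deriv (fun z' => g₂ x y z') z;
         deriv (fun x' => g₃ x' y z) x, deriv (fun y' => g₃ x y' z) y, deriv (fun z' => g₃ x y z') z]
      = -((1 - z) * z * (1 - x - y) ^ 4) := by
  rw [g₁_eq_bernoulliMixture, g₂_eq_bernoulliMixture, g₃_eq_bernoulliMixture,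
    det_jacobian_bernoulliMixture (by fun_prop) (by fun_prop) (by fun_prop),
    deriv_id'', deriv_mul_one_sub, deriv_mul_one_sub, deriv_mul_one_sub_sq,
    deriv_mul_one_sub_sq, Matrix.det_fin_three]
  simp only [Matrix.of_apply, Matrix.cons_val', Matrix.cons_val_zero, Matrix.cons_val_one,
    Matrix.cons_val_two, Matrix.empty_val', Matrix.cons_val_fin_one, Matrix.vecHead,
    Matrix.tail_cons]
  ring
end
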